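/- arXiv:1807.11538 — 11 statements merged into one kernel-verified Lean document; each statement's English description precedes it below -/
import Mathlib

section
/- There exist universal constants c₀, C₀ ≥ 0 with the following property. Let A be an m×n matrix with entries in [0,1] whose ℓ0-column sparsity Δ₀ satisfies Δ₀ ≥ 2, let c ∈ ℝ_{≥0}^n, and let x ∈ ℝ_{≥0}^n satisfy Ax ≥ 1 componentwise. Set α = ln Δ₀ + ln ln Δ₀ + c₀. Then there exists a random vector z ∈ ℕ^n such that almost surely Az ≥ 1 componentwise and z_j ≤ ⌈α x_j⌉ for every j ∈ [n], and E[⟨c,z⟩] ≤ (α + C₀)·⟨c,x⟩. -/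
/-!
Round `t = α x` independently, coordinate `j` going up to `⌈t j⌉₊` with probability
`Int.fract (t j)`; the rounded vector costs `α ⟨c, x⟩` in expectation. Since every row has
fractional mass `∑ j, A i j * t j ≥ α`, a Chernoff bound with parameter `log α` shows that a row is
left uncovered with probability at most `α e^{1 - α}`. Each uncovered row `i` is repaired by an
integral cover of cost at most `4 ∑_{j, A i j ≠ 0} c j x j`, made of its cheapest coordinates
(cost at most `2 ⟨c, t⟩ / α` per unit of coverage) and trimmed to total coverage at most `2`.
Since every column meets at most `Δ₀` rows, the expected repair cost is at most
`4 Δ₀ α e^{1 - α} ⟨c, x⟩`, which is `O(⟨c, x⟩)` once `e^α = Δ₀ log Δ₀ e^{c₀}`.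
-/

open MeasureTheory ProbabilityTheory Finset Real

section CheapCover

variable {ι : Type*} [Fintype ι]

theorem exists_le_one_le_sum_mul_le_two {a : ι → ℝ} (ha : ∀ j, a j ∈ Set.Icc (0 : ℝ) 1)
    (y : ι → ℕ) (hy : 1 ≤ ∑ j, a j * y j) :
    ∃ y' ≤ y, 1 ≤ ∑ j, a j * y' j ∧ ∑ j, a j * y' j ≤ 2 := by
  classical
  induction y using WellFoundedLT.induction with
  | _ y ih =>
  by_cases hle : ∑ j, a j * y j ≤ 2
  · exact ⟨y, le_rfl, hy, hle⟩
  obtain ⟨j, hj⟩ : ∃ j, y j ≠ 0 := by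
    by_contra! h
    simp [h] at hle
  set y' := Function.update y j (y j - 1)
  have hy' : y' < y := by
    refine Pi.lt_def.2 ⟨fun k => ?_, j, by simp [y']; omega⟩
    by_cases hk : k = j
    · subst hk; simp [y']
    · simp [y', hk]
  have hsum : ∑ k, a k * y k = ∑ k, a k * y' k + a j := by
    have hk : ∀ k, a k * y k = a k * y' k + if k = j then a j else 0 := by
      intro k
      by_cases hk : k = j
      · subst hk
        simp only [y', Function.update_self, if_true]
        push_cast [Nat.one_le_iff_ne_zero.2 hj]
        ring
      · simp [y', hk]
    simp only [hk, sum_add_distrib, sum_ite_eq', mem_univ, if_true]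
  obtain ⟨y'', hy'', h1, h2⟩ := ih y' hy' (by linarith [(ha j).2])
  exact ⟨y'', hy''.trans hy'.le, h1, h2⟩

theorem sum_filter_mul_le_of_lt_mul {a c t : ι → ℝ} (hc : ∀ j, 0 ≤ c j) (ht : ∀ j, 0 ≤ t j)
    {β : ℝ} (hβ : 0 ≤ β) :
    ∑ j with 2 * (∑ k, c k * t k) * a j < β * c j, a j * t j ≤ β / 2 := by
  set F := ∑ k, c k * t k
  set H := univ.filter fun j => 2 * F * a j < β * c j
  have hterm : ∀ j, c j * t j ≤ F := fun j =>
    single_le_sum (f := fun k => c k * t k) (fun k _ => mul_nonneg (hc k) (ht k)) (mem_univ j)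
  have hF : 0 ≤ F := sum_nonneg fun k _ => mul_nonneg (hc k) (ht k)
  obtain hF | hF := hF.eq_or_lt
  · have hzero : ∀ j ∈ H, a j * t j = 0 := by
      intro j hj
      rw [mem_filter, ← hF] at hj
      have hcj : 0 < c j := pos_of_mul_pos_right (by simpa using hj.2) hβ
      have : t j = 0 := by nlinarith [hterm j, ht j]
      simp [this]
    rw [sum_eq_zero hzero]
    linarith
  · have : 2 * F * ∑ j ∈ H, a j * t j ≤ β * F :=
      calc 2 * F * ∑ j ∈ H, a j * t j = ∑ j ∈ H, 2 * F * a j * t j := by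
            rw [mul_sum]; simp only [mul_assoc]
        _ ≤ ∑ j ∈ H, β * c j * t j :=
            sum_le_sum fun j hj => mul_le_mul_of_nonneg_right (mem_filter.1 hj).2.le (ht j)
        _ ≤ ∑ j, β * c j * t j :=
            sum_le_sum_of_subset_of_nonneg (filter_subset _ _)
              fun j _ _ => mul_nonneg (mul_nonneg hβ (hc j)) (ht j)
        _ = β * F := by rw [mul_sum]; simp only [mul_assoc]
    nlinarith

theorem exists_cheap_cover {a c t : ι → ℝ} (ha : ∀ j, a j ∈ Set.Icc (0 : ℝ) 1)
    (hc : ∀ j, 0 ≤ c j) (ht : ∀ j, 0 ≤ t j) {β : ℝ} (hβ : 2 ≤ β) (hmass : β ≤ ∑ j, a j * t j) :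
    ∃ y : ι → ℕ, (∀ j, y j ≤ ⌈t j⌉₊) ∧ 1 ≤ ∑ j, a j * y j ∧
      β * ∑ j, c j * y j ≤ 4 * ∑ j, c j * t j := by
  classical
  set F := ∑ j, c j * t j
  have hF : 0 ≤ F := sum_nonneg fun j _ => mul_nonneg (hc j) (ht j)
  -- the cheap coordinates cost at most `2 F / β` per unit of `a`
  set y₀ : ι → ℕ := fun j => if β * c j ≤ 2 * F * a j then ⌈t j⌉₊ else 0
  have hy₀ : β / 2 ≤ ∑ j, a j * y₀ j := by
    have hsplit := sum_filter_add_sum_filter_not univ (fun j => β * c j ≤ 2 * F * a j)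
      fun j => a j * t j
    have hexpensive := sum_filter_mul_le_of_lt_mul (a := a) hc ht (by linarith : 0 ≤ β)
    calc β / 2 ≤ ∑ j with β * c j ≤ 2 * F * a j, a j * t j := by
          simp only [not_le] at hsplit
          linarith
      _ ≤ ∑ j, a j * y₀ j := by
          rw [sum_filter]
          gcongr with j
          simp only [y₀]
          split_ifs
          · exact mul_le_mul_of_nonneg_left (Nat.le_ceil _) (ha j).1
          · simp
  obtain ⟨y, hyy₀, hy1, hy2⟩ := exists_le_one_le_sum_mul_le_two ha y₀ (by linarith)
  refine ⟨y, fun j => (hyy₀ j).trans (by simp only [y₀]; split_ifs <;> simp), hy1, ?_⟩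
  have hcost : ∀ j, β * (c j * y j) ≤ 2 * F * (a j * y j) := by
    intro j
    by_cases hj : β * c j ≤ 2 * F * a j
    · have := mul_le_mul_of_nonneg_right hj (Nat.cast_nonneg (y j))
      linarith
    · have : y j = 0 := Nat.le_zero.1 (by simpa [y₀, hj] using hyy₀ j)
      simp [this]
  calc β * ∑ j, c j * y j = ∑ j, β * (c j * y j) := mul_sum _ _ _
    _ ≤ ∑ j, 2 * F * (a j * y j) := sum_le_sum fun j _ => hcost j
    _ = 2 * F * ∑ j, a j * y j := (mul_sum _ _ _).symm
    _ ≤ 4 * F := by nlinarith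

theorem exists_cheap_cover_of_support {a c t : ι → ℝ} (ha : ∀ j, a j ∈ Set.Icc (0 : ℝ) 1)
    (hc : ∀ j, 0 ≤ c j) (ht : ∀ j, 0 ≤ t j) {β : ℝ} (hβ : 2 ≤ β) (hmass : β ≤ ∑ j, a j * t j) :
    ∃ y : ι → ℕ, (∀ j, y j ≤ ⌈t j⌉₊) ∧ 1 ≤ ∑ j, a j * y j ∧
      β * ∑ j, c j * y j ≤ 4 * ∑ j with a j ≠ 0, c j * t j := by
  have hat : ∀ j, a j * (if a j ≠ 0 then t j else 0) = a j * t j := fun j => by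
    split_ifs with h <;> simp_all
  obtain ⟨y, hyt, hy, hcost⟩ := exists_cheap_cover (t := fun j => if a j ≠ 0 then t j else 0) ha hc
    (fun j => by split_ifs <;> simp [ht j]) hβ (by simpa only [hat] using hmass)
  refine ⟨y, fun j => (hyt j).trans (Nat.ceil_mono ?_), hy, ?_⟩
  · split_ifs <;> simp [ht j]
  · simpa [sum_filter, mul_ite] using hcost

end CheapCover

noncomputable def roundUpIf (b : Bool) (t : ℝ) : ℕ := if b then ⌈t⌉₊ else ⌊t⌋₊

noncomputable def fractUnit (t : ℝ) : unitInterval :=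
  ⟨Int.fract t, Int.fract_nonneg t, (Int.fract_lt_one t).le⟩

noncomputable def roundingMeasure {κ : Type*} [Fintype κ] (t : κ → ℝ) : Measure (κ → Bool) :=
  Measure.pi fun j => Ber(true, false, fractUnit (t j))

instance {κ : Type*} [Fintype κ] (t : κ → ℝ) : IsProbabilityMeasure (roundingMeasure t) := by
  unfold roundingMeasure
  infer_instance

theorem roundUpIf_le_ceil (b : Bool) (t : ℝ) : roundUpIf b t ≤ ⌈t⌉₊ := by
  cases b <;> simp [roundUpIf, Nat.floor_le_ceil]

theorem natCast_floor_add_fract {t : ℝ} (ht : 0 ≤ t) : (⌊t⌋₊ : ℝ) + Int.fract t = t := by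
  have := Int.floor_add_fract t
  rwa [← Int.natCast_floor_eq_floor ht, Int.cast_natCast] at this

/-- For integral `t`, `⌈t⌉₊ ≠ ⌊t⌋₊ + 1`, but then both sides vanish. -/
theorem fract_mul_apply_ceil {t : ℝ} (ht : 0 ≤ t) (g : ℕ → ℝ) :
    Int.fract t * g ⌈t⌉₊ = Int.fract t * g (⌊t⌋₊ + 1) := by
  rcases eq_or_ne (Int.fract t) 0 with h | h
  · simp [h]
  · have hlt : ⌊t⌋₊ < ⌈t⌉₊ :=
      Nat.lt_ceil.2 (by linarith [natCast_floor_add_fract ht, (Int.fract_nonneg t).lt_of_ne' h])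
    rw [le_antisymm (Nat.ceil_le_floor_add_one t) hlt]

theorem integral_roundUpIf {t : ℝ} (ht : 0 ≤ t) (g : ℕ → ℝ) :
    ∫ b, g (roundUpIf b t) ∂Ber(true, false, fractUnit t) =
      Int.fract t * g (⌊t⌋₊ + 1) + (1 - Int.fract t) * g ⌊t⌋₊ := by
  rw [integral_bernoulliMeasure, ← fract_mul_apply_ceil ht]
  simp [roundUpIf, fractUnit]

theorem integral_cast_roundUpIf {t : ℝ} (ht : 0 ≤ t) :
    ∫ b, (roundUpIf b t : ℝ) ∂Ber(true, false, fractUnit t) = t := by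
  rw [integral_roundUpIf ht fun k => (k : ℝ)]
  push_cast
  linarith [natCast_floor_add_fract ht]

theorem integral_sum_mul_roundUpIf {κ : Type*} [Fintype κ] (c : κ → ℝ) {t : κ → ℝ}
    (ht : ∀ j, 0 ≤ t j) :
    ∫ ω, ∑ j, c j * (roundUpIf (ω j) (t j) : ℝ) ∂roundingMeasure t = ∑ j, c j * t j := by
  rw [integral_finsetSum _ fun j _ => Integrable.of_finite]
  refine sum_congr rfl fun j _ => ?_
  rw [integral_const_mul, roundingMeasure,
    integral_comp_eval (X := fun _ => Bool) (μ := fun j => Ber(true, false, fractUnit (t j)))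
      (i := j) (f := fun b => (roundUpIf b (t j) : ℝ)) Measurable.of_discrete.aestronglyMeasurable,
    integral_cast_roundUpIf (ht j)]

theorem exp_neg_mul_le_one_sub_mul {s a : ℝ} (ha : a ∈ Set.Icc (0 : ℝ) 1) :
    exp (-(s * a)) ≤ 1 - a * (1 - exp (-s)) := by
  have := convexOn_exp.2 (Set.mem_univ 0) (Set.mem_univ (-s)) (sub_nonneg.2 ha.2) ha.1 (by ring)
  simp only [smul_eq_mul, mul_zero, zero_add, exp_zero, mul_one] at this
  rw [show -(s * a) = a * -s by ring]
  linarith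

theorem integral_exp_neg_mul_roundUpIf_le {s a t : ℝ} (ha : a ∈ Set.Icc (0 : ℝ) 1) (ht : 0 ≤ t) :
    ∫ b, exp (-(s * (a * roundUpIf b t))) ∂Ber(true, false, fractUnit t) ≤
      exp (-((1 - exp (-s)) * (a * t))) := by
  set u := 1 - exp (-s)
  set p := Int.fract t
  set f : ℝ := (⌊t⌋₊ : ℝ)
  have hu : u ≤ s := by linarith [add_one_le_exp (-s)]
  have hp : p ∈ Set.Icc (0 : ℝ) 1 := ⟨Int.fract_nonneg t, (Int.fract_lt_one t).le⟩
  have hf : 0 ≤ a * f := mul_nonneg ha.1 (Nat.cast_nonneg _)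
  rw [integral_roundUpIf ht fun k => exp (-(s * (a * k)))]
  conv_rhs => rw [← natCast_floor_add_fract ht]
  push_cast
  calc p * exp (-(s * (a * (f + 1)))) + (1 - p) * exp (-(s * (a * f)))
      = exp (-(s * (a * f))) * (1 - p + p * exp (-(s * a))) := by
        rw [show -(s * (a * (f + 1))) = -(s * (a * f)) + -(s * a) by ring, exp_add]
        ring
    _ ≤ exp (-(u * (a * f))) * exp (-(u * (a * p))) := by
        have hfloor : exp (-(s * (a * f))) ≤ exp (-(u * (a * f))) := exp_le_exp.2 (by nlinarith)
        have hfrac : 1 - p + p * exp (-(s * a)) ≤ exp (-(u * (a * p))) := by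
          have := mul_le_mul_of_nonneg_left (exp_neg_mul_le_one_sub_mul (s := s) ha) hp.1
          linarith [add_one_le_exp (-(u * (a * p)))]
        exact mul_le_mul hfloor hfrac
          (by linarith [mul_nonneg hp.1 (exp_pos (-(s * a))).le, hp.2]) (exp_pos _).le
    _ = exp (-(u * (a * (f + p)))) := by rw [← exp_add]; ring_nf

theorem mgf_sum_mul_roundUpIf_le {κ : Type*} [Fintype κ] {a t : κ → ℝ}
    (ha : ∀ j, a j ∈ Set.Icc (0 : ℝ) 1) (ht : ∀ j, 0 ≤ t j) (s : ℝ) :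
    mgf (fun ω => ∑ j, a j * (roundUpIf (ω j) (t j) : ℝ)) (roundingMeasure t) (-s) ≤
      exp (-((1 - exp (-s)) * ∑ j, a j * t j)) := by
  have hprod : ∀ ω : κ → Bool, exp (-s * ∑ j, a j * (roundUpIf (ω j) (t j) : ℝ)) =
      ∏ j, exp (-(s * (a j * roundUpIf (ω j) (t j)))) := by
    intro ω
    rw [← exp_sum, mul_sum]
    simp only [neg_mul]
  rw [mgf, funext hprod, roundingMeasure,
    integral_fintype_prod_eq_prod fun j b => exp (-(s * (a j * (roundUpIf b (t j) : ℝ)))),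
    mul_sum, ← sum_neg_distrib, exp_sum]
  exact prod_le_prod (fun j _ => integral_nonneg fun _ => (exp_pos _).le)
    fun j _ => integral_exp_neg_mul_roundUpIf_le (ha j) (ht j)

theorem measureReal_sum_mul_roundUpIf_lt_one_le {κ : Type*} [Fintype κ] {a t : κ → ℝ}
    (ha : ∀ j, a j ∈ Set.Icc (0 : ℝ) 1) (ht : ∀ j, 0 ≤ t j) {β : ℝ} (hβ : 1 ≤ β)
    (hmass : β ≤ ∑ j, a j * t j) :
    (roundingMeasure t).real {ω | ∑ j, a j * (roundUpIf (ω j) (t j) : ℝ) < 1} ≤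
      β * exp (1 - β) := by
  have hexp : exp (log β) = β := exp_log (by linarith)
  have hu : 0 ≤ 1 - exp (-log β) := by
    rw [exp_neg, hexp]
    linarith [inv_le_one_of_one_le₀ hβ]
  calc (roundingMeasure t).real {ω | ∑ j, a j * (roundUpIf (ω j) (t j) : ℝ) < 1}
      ≤ (roundingMeasure t).real {ω | ∑ j, a j * (roundUpIf (ω j) (t j) : ℝ) ≤ 1} :=
        measureReal_mono (Set.ofPred_subset_ofPred.2 fun _ => le_of_lt)
    _ ≤ exp (-(-log β) * 1) * exp (-((1 - exp (-log β)) * ∑ j, a j * t j)) :=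
        (measure_le_le_exp_mul_mgf 1 (neg_nonpos.2 (log_nonneg hβ)) Integrable.of_finite).trans
          (by gcongr; exact mgf_sum_mul_roundUpIf_le ha ht _)
    _ ≤ exp (log β) * exp (-((1 - exp (-log β)) * β)) := by
        rw [neg_neg, mul_one]
        gcongr
    _ = β * exp (1 - β) := by
        rw [exp_neg (log β), hexp]
        congr 2
        field_simp
        ring

section Patch

variable {ι κ : Type*} [Fintype ι] [Fintype κ] {A : ι → κ → ℝ} {b : κ → ℕ} {y : ι → κ → ℕ}

noncomputable def uncovered (A : ι → κ → ℝ) (b : κ → ℕ) : Finset ι :=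
  {i | ∑ j, A i j * b j < 1}

noncomputable def patch (A : ι → κ → ℝ) (b : κ → ℕ) (y : ι → κ → ℕ) (j : κ) : ℕ :=
  max (b j) ((uncovered A b).sup fun i => y i j)

theorem mem_uncovered {i : ι} : i ∈ uncovered A b ↔ ∑ j, A i j * b j < 1 := by
  simp [uncovered]

theorem one_le_sum_mul_patch (hA : ∀ i j, 0 ≤ A i j) (hy : ∀ i, 1 ≤ ∑ j, A i j * y i j) (i : ι) :
    1 ≤ ∑ j, A i j * patch A b y j := by
  by_cases hi : i ∈ uncovered A b
  · refine (hy i).trans (sum_le_sum fun j _ => mul_le_mul_of_nonneg_left ?_ (hA i j))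
    exact_mod_cast le_max_of_le_right (le_sup (f := fun i => y i j) hi)
  · refine (not_lt.1 (mem_uncovered.not.1 hi)).trans
      (sum_le_sum fun j _ => mul_le_mul_of_nonneg_left ?_ (hA i j))
    exact_mod_cast le_max_left _ _

theorem patch_le {u : κ → ℕ} (hb : b ≤ u) (hy : ∀ i, y i ≤ u) : patch A b y ≤ u :=
  fun j => max_le (hb j) (Finset.sup_le fun i _ => hy i j)

theorem sum_mul_patch_le {c : κ → ℝ} (hc : ∀ j, 0 ≤ c j) :
    ∑ j, c j * patch A b y j ≤ ∑ j, c j * b j + ∑ i ∈ uncovered A b, ∑ j, c j * y i j := by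
  have hpatch : ∀ j, (patch A b y j : ℝ) ≤ b j + ∑ i ∈ uncovered A b, (y i j : ℝ) := by
    intro j
    exact_mod_cast max_le (Nat.le_add_right _ _) <| (Finset.sup_le fun i hi =>
      single_le_sum (f := fun i => y i j) (fun _ _ => Nat.zero_le _) hi).trans (Nat.le_add_left _ _)
  calc ∑ j, c j * patch A b y j ≤ ∑ j, (c j * b j + ∑ i ∈ uncovered A b, c j * y i j) := by
        gcongr with j
        rw [← mul_sum, ← mul_add]
        exact mul_le_mul_of_nonneg_left (hpatch j) (hc j)
    _ = ∑ j, c j * b j + ∑ i ∈ uncovered A b, ∑ j, c j * y i j := by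
        rw [sum_add_distrib, sum_comm]

theorem lintegral_sum_mul_patch_le {c t : κ → ℝ} (hc : ∀ j, 0 ≤ c j) (ht : ∀ j, 0 ≤ t j) {q : ℝ}
    (hq : ∀ i, (roundingMeasure t).real
      {ω | ∑ j, A i j * (roundUpIf (ω j) (t j) : ℝ) < 1} ≤ q) :
    ∫⁻ ω, ENNReal.ofReal (∑ j, c j * (patch A (fun j => roundUpIf (ω j) (t j)) y j : ℝ))
        ∂roundingMeasure t ≤
      ENNReal.ofReal (∑ j, c j * t j + q * ∑ i, ∑ j, c j * y i j) := by
  classical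
  set b : (κ → Bool) → κ → ℕ := fun ω j => roundUpIf (ω j) (t j)
  set K : ι → ℝ := fun i => ∑ j, c j * y i j
  have hK : ∀ i, 0 ≤ K i := fun i => sum_nonneg fun j _ => mul_nonneg (hc j) (Nat.cast_nonneg _)
  set g : (κ → Bool) → ℝ := fun ω =>
    ∑ j, c j * b ω j + ∑ i, {ω | ∑ j, A i j * (b ω j : ℝ) < 1}.indicator (fun _ => K i) ω
  have hcost : ∀ ω, ∑ j, c j * (patch A (b ω) y j : ℝ) ≤ g ω := fun ω => by
    have hrepair : ∑ i, {ω | ∑ j, A i j * (b ω j : ℝ) < 1}.indicator (fun _ => K i) ω =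
        ∑ i ∈ uncovered A (b ω), K i := by
      rw [sum_congr rfl fun i _ => Set.indicator_apply _ _ _]
      simp [uncovered, sum_filter]
    simpa only [g, hrepair] using sum_mul_patch_le (A := A) (b := b ω) (y := y) hc
  have hg : ∀ ω, 0 ≤ g ω := fun ω =>
    add_nonneg (sum_nonneg fun j _ => mul_nonneg (hc j) (Nat.cast_nonneg _))
      (sum_nonneg fun i _ => Set.indicator_nonneg (fun _ _ => hK i) _)
  calc ∫⁻ ω, ENNReal.ofReal (∑ j, c j * (patch A (b ω) y j : ℝ)) ∂roundingMeasure t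
      ≤ ∫⁻ ω, ENNReal.ofReal (g ω) ∂roundingMeasure t :=
        lintegral_mono fun ω => ENNReal.ofReal_le_ofReal (hcost ω)
    _ = ENNReal.ofReal (∫ ω, g ω ∂roundingMeasure t) :=
        (ofReal_integral_eq_lintegral_ofReal Integrable.of_finite (ae_of_all _ hg)).symm
    _ ≤ ENNReal.ofReal (∑ j, c j * t j + q * ∑ i, K i) := by
        refine ENNReal.ofReal_le_ofReal ?_
        rw [integral_add Integrable.of_finite Integrable.of_finite, integral_sum_mul_roundUpIf c ht,
          integral_finsetSum _ fun i _ => Integrable.of_finite, mul_sum]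
        gcongr with i
        rw [integral_indicator_const _ MeasurableSet.of_discrete, smul_eq_mul]
        exact mul_le_mul_of_nonneg_right (hq i) (hK i)

end Patch

theorem sum_sum_filter_ne_zero_le {ι κ : Type*} [Fintype ι] [Fintype κ] (A : ι → κ → ℝ)
    {w : κ → ℝ} (hw : ∀ j, 0 ≤ w j) {Δ : ℕ} (hΔ : ∀ j, #{i | A i j ≠ 0} ≤ Δ) :
    ∑ i, ∑ j with A i j ≠ 0, w j ≤ Δ * ∑ j, w j := by
  simp_rw [sum_filter]
  rw [sum_comm, mul_sum]
  gcongr with j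
  rw [← sum_filter, sum_const, nsmul_eq_mul]
  exact mul_le_mul_of_nonneg_right (by exact_mod_cast hΔ j) (hw j)

theorem exists_random_cover_lintegral_cost_le {ι κ : Type*} [Fintype ι] [Fintype κ] {A : ι → κ → ℝ}
    {c x : κ → ℝ} {Δ : ℕ} {α : ℝ} (hA : ∀ i j, A i j ∈ Set.Icc (0 : ℝ) 1) (hc : ∀ j, 0 ≤ c j)
    (hx : ∀ j, 0 ≤ x j) (hAx : ∀ i, 1 ≤ ∑ j, A i j * x j) (hΔ : ∀ j, #{i | A i j ≠ 0} ≤ Δ)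
    (hα : 2 ≤ α) :
    ∃ z : (κ → Bool) → κ → ℕ,
      (∀ ω, (∀ i, 1 ≤ ∑ j, A i j * (z ω j : ℝ)) ∧ ∀ j, z ω j ≤ ⌈α * x j⌉₊) ∧
      ∫⁻ ω, ENNReal.ofReal (∑ j, c j * (z ω j : ℝ)) ∂roundingMeasure (fun j => α * x j) ≤
        ENNReal.ofReal ((α + 4 * Δ * α * exp (1 - α)) * ∑ j, c j * x j) := by
  set t : κ → ℝ := fun j => α * x j
  have ht : ∀ j, 0 ≤ t j := fun j => mul_nonneg (by linarith) (hx j)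
  have hct : ∀ s : Finset κ, ∑ j ∈ s, c j * t j = α * ∑ j ∈ s, c j * x j := fun s => by
    rw [mul_sum]; exact sum_congr rfl fun j _ => by ring
  have hmass : ∀ i, α ≤ ∑ j, A i j * t j := fun i => by
    have hAt : ∑ j, A i j * t j = α * ∑ j, A i j * x j := by
      rw [mul_sum]; exact sum_congr rfl fun j _ => by ring
    nlinarith [hAx i]
  choose y hyt hycov hycost using fun i =>
    exists_cheap_cover_of_support (hA i) hc ht hα (hmass i)
  have hrepair : ∑ i, ∑ j, c j * y i j ≤ 4 * Δ * ∑ j, c j * x j := by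
    have hrow : ∀ i, ∑ j, c j * y i j ≤ 4 * ∑ j with A i j ≠ 0, c j * x j := fun i => by
      have := hycost i
      rw [hct] at this
      nlinarith
    calc ∑ i, ∑ j, c j * y i j ≤ ∑ i, 4 * ∑ j with A i j ≠ 0, c j * x j :=
          sum_le_sum fun i _ => hrow i
      _ = 4 * ∑ i, ∑ j with A i j ≠ 0, c j * x j := (mul_sum _ _ _).symm
      _ ≤ 4 * (Δ * ∑ j, c j * x j) := by
          gcongr
          exact sum_sum_filter_ne_zero_le A (fun j => mul_nonneg (hc j) (hx j)) hΔ
      _ = 4 * Δ * ∑ j, c j * x j := by ring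
  refine ⟨fun ω => patch A (fun j => roundUpIf (ω j) (t j)) y,
    fun ω => ⟨one_le_sum_mul_patch (fun i j => (hA i j).1) hycov,
      patch_le (fun j => roundUpIf_le_ceil _ _) hyt⟩, ?_⟩
  refine (lintegral_sum_mul_patch_le hc ht fun i =>
    measureReal_sum_mul_roundUpIf_lt_one_le (hA i) ht (by linarith) (hmass i)).trans
      (ENNReal.ofReal_le_ofReal ?_)
  rw [hct]
  have : 0 ≤ α * exp (1 - α) := mul_nonneg (by linarith) (exp_pos _).le
  nlinarith [mul_le_mul_of_nonneg_left hrepair this]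

theorem two_le_log_add_log_log_add_three {Δ : ℝ} (hΔ : 2 ≤ Δ) :
    2 ≤ log Δ + log (log Δ) + 3 := by
  have hlog : 1 / 2 ≤ log Δ := by
    linarith [log_le_log (by norm_num) hΔ, log_two_gt_d9]
  have := one_sub_inv_le_log_of_pos (by linarith : 0 < log Δ)
  have : (log Δ)⁻¹ ≤ 2 := by
    rw [inv_le_comm₀ (by linarith) (by norm_num)]; linarith
  linarith

theorem four_mul_mul_exp_one_sub_le {Δ α : ℝ} (hΔ : 2 ≤ Δ) (hα : α = log Δ + log (log Δ) + 3) :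
    4 * Δ * α * exp (1 - α) ≤ 8 := by
  set L := log Δ
  have hL : 1 / 2 ≤ L := by linarith [log_le_log (by norm_num) hΔ, log_two_gt_d9]
  have hexp : Δ * L * exp (1 - α) = exp (-2) := by
    rw [hα, show 1 - (L + log L + 3) = -2 - L - log L by ring, exp_sub, exp_sub,
      exp_log (by linarith), exp_log (by linarith)]
    field_simp
  have hαL : α ≤ 8 * L := by linarith [log_le_sub_one_of_pos (by linarith : 0 < L)]
  have he : exp (-2) ≤ 1 / 4 := by
    rw [exp_neg, show (2 : ℝ) = 1 + 1 by norm_num, exp_add]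
    have := add_one_le_exp (1 : ℝ)
    rw [inv_le_comm₀ (by positivity) (by norm_num)]
    nlinarith
  calc 4 * Δ * α * exp (1 - α) = 4 * (α / L) * exp (-2) := by
        rw [← hexp]; field_simp
    _ ≤ 4 * 8 * (1 / 4) := by
        gcongr
        rwa [div_le_iff₀ (by linarith)]
    _ = 8 := by norm_num

/-- randomized rounding with alteration for ℓ0-column-sparse
covering programs (Theorem `l0-alteration`). -/
theorem stmt_0 :
    ∃ c₀ C₀ : ℝ, 0 ≤ c₀ ∧ 0 ≤ C₀ ∧
      ∀ (m n : ℕ) (A : Fin m → Fin n → ℝ) (c x : Fin n → ℝ) (Δ₀ : ℕ) (α : ℝ),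
        (∀ i j, A i j ∈ Set.Icc (0 : ℝ) 1) →
        (∀ j, 0 ≤ c j) → (∀ j, 0 ≤ x j) →
        (∀ i, 1 ≤ ∑ j, A i j * x j) →
        Δ₀ = (Finset.univ.sup fun j : Fin n =>
          (Finset.univ.filter fun i : Fin m => A i j ≠ 0).card) →
        2 ≤ Δ₀ →
        α = Real.log Δ₀ + Real.log (Real.log Δ₀) + c₀ →
        ∃ (Ω : Type) (_ : MeasureSpace Ω) (z : Ω → Fin n → ℕ),
          IsProbabilityMeasure (volume : Measure Ω) ∧
          Measurable z ∧
          (∀ᵐ ω ∂(volume : Measure Ω),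
            (∀ i, 1 ≤ ∑ j, A i j * (z ω j : ℝ)) ∧ ∀ j, z ω j ≤ ⌈α * x j⌉₊) ∧
          ∫⁻ ω, ENNReal.ofReal (∑ j, c j * (z ω j : ℝ)) ≤
            ENNReal.ofReal ((α + C₀) * ∑ j, c j * x j) := by
  refine ⟨3, 8, by norm_num, by norm_num, ?_⟩
  intro m n A c x Δ₀ α hA hc hx hAx hΔ₀ hΔ₂ hα
  have hΔ : (2 : ℝ) ≤ Δ₀ := by exact_mod_cast hΔ₂
  obtain ⟨z, hz, hcost⟩ := exists_random_cover_lintegral_cost_le hA hc hx hAx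
    (fun j => hΔ₀ ▸ le_sup (f := fun j => #{i | A i j ≠ 0}) (mem_univ j))
    (hα ▸ two_le_log_add_log_log_add_three hΔ)
  refine ⟨Fin n → Bool, ⟨roundingMeasure fun j => α * x j⟩, z, inferInstanceAs
    (IsProbabilityMeasure (roundingMeasure _)), Measurable.of_discrete, ae_of_all _ hz,
    hcost.trans (ENNReal.ofReal_le_ofReal ?_)⟩
  gcongr
  · exact sum_nonneg fun j _ => mul_nonneg (hc j) (hx j)
  · linarith [four_mul_mul_exp_one_sub_le hΔ hα]
end

section
/- For every η > 0 there exists Δ* ∈ (0,1) with the following property. Let A be an m×n matrix with nonnegative entries whose maximum column sum Δ₁ satisfies 0 < Δ₁ ≤ Δ*, let c ∈ ℝ_{≥0}^n, and let x ∈ ℝ_{≥0}^n satisfy Ax ≥ 1 componentwise. Then there exists a random vector z ∈ ℕ^n such that almost surely Az ≥ 1 componentwise, and E[⟨c,z⟩] ≤ (1 + (4+η)·√(Δ₁·ln(1/Δ₁)))·⟨c,x⟩. -/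
/-!
Scale the fractional solution to `v = (1 + 2Δ₁) x` and round it deterministically, Beck–Fiala
style. As long as some row is heavy on the fractional coordinates `F` of `v` (its mass there
exceeds `2Δ₁`), there are fewer than `|F|/2` heavy rows, so some nonzero direction supported on
`F` keeps the cost and every heavy row fixed; moving along it until a coordinate hits its floor
shrinks `F`. Once no row is heavy, rounding down loses at most `2Δ₁` in every row. The resulting
integer cover costs at most `(1 + 2Δ₁) ⟨c, x⟩`, and `2Δ₁ ≤ 4 √(Δ₁ ln (1/Δ₁))` once `Δ₁ ≤ 1/e`.
-/

open MeasureTheory Finset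

lemma exists_ne_zero_forall_sum_mul_eq_zero {α β : Type*} [Fintype α] [Fintype β]
    (M : α → β → ℝ) (h : Fintype.card α < Fintype.card β) :
    ∃ d : β → ℝ, d ≠ 0 ∧ ∀ a, ∑ b, M a b * d b = 0 := by
  have hker := LinearMap.ker_ne_bot_of_finrank_lt (f := (Matrix.of M).mulVecLin) (by simpa using h)
  obtain ⟨d, hd, hd0⟩ := Submodule.exists_mem_ne_zero_of_ne_bot hker
  exact ⟨d, hd0, fun a => by simpa [Matrix.mulVec, dotProduct] using congrFun hd a⟩

section Rounding

variable {ι κ : Type*} [Fintype ι] [Fintype κ]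

lemma exists_neg_supported_forall_sum_mul_eq_zero {α : Type*} [Fintype α] (r : α → κ → ℝ)
    (F : Finset κ) (h : Fintype.card α < #F) :
    ∃ d : κ → ℝ, (∃ j, d j < 0) ∧ (∀ j ∉ F, d j = 0) ∧ ∀ a, ∑ j, r a j * d j = 0 := by
  classical
  -- the constraints `d j = 0` off `F` are rows `Pi.single j 1`
  obtain ⟨d, hd0, hd⟩ := exists_ne_zero_forall_sum_mul_eq_zero
    (Sum.elim r fun j : {j // j ∉ F} => Pi.single j.1 1) (by
      simp only [Fintype.card_sum, Fintype.card_subtype_compl, Fintype.card_coe]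
      have := card_le_univ F
      omega)
  have hsupp : ∀ j ∉ F, d j = 0 := fun j hj => by simpa [Pi.single_apply] using hd (.inr ⟨j, hj⟩)
  have horth : ∀ a, ∑ j, r a j * d j = 0 := fun a => hd (.inl a)
  obtain ⟨j, hj⟩ := Function.ne_iff.mp hd0
  rcases (hj : d j ≠ 0).lt_or_gt with hneg | hpos
  · exact ⟨d, ⟨j, hneg⟩, hsupp, horth⟩
  · refine ⟨-d, ⟨j, by simpa using hpos⟩, fun j hj => by simp [hsupp j hj], fun a => ?_⟩
    simp [horth a]

open scoped Classical in
noncomputable def fractSupport (v : κ → ℝ) : Finset κ := {j | Int.fract (v j) ≠ 0}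

@[simp]
lemma mem_fractSupport {v : κ → ℝ} {j : κ} : j ∈ fractSupport v ↔ Int.fract (v j) ≠ 0 := by
  simp [fractSupport]

lemma sum_mul_sub_sum_mul_le_sum_fractSupport {a v : κ → ℝ} {z : κ → ℤ} (ha : ∀ j, 0 ≤ a j)
    (hz : ∀ j, ⌊v j⌋ ≤ z j) :
    ∑ j, a j * v j - ∑ j, a j * z j ≤ ∑ j ∈ fractSupport v, a j := by
  calc ∑ j, a j * v j - ∑ j, a j * z j ≤ ∑ j, a j * Int.fract (v j) := by
        rw [← sum_sub_distrib]
        gcongr with j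
        rw [← mul_sub, Int.fract]
        exact mul_le_mul_of_nonneg_left (by linarith [(Int.cast_le (R := ℝ)).2 (hz j)]) (ha j)
    _ = ∑ j ∈ fractSupport v, a j * Int.fract (v j) :=
        (sum_subset (subset_univ _) fun j _ hj => by simp_all).symm
    _ ≤ ∑ j ∈ fractSupport v, a j :=
        sum_le_sum fun j _ => mul_le_of_le_one_right (ha j) (Int.fract_lt_one _).le

lemma exists_floor_le_add_mul_eq_floor (v d : κ → ℝ) (hd : ∃ j, d j < 0) :
    ∃ t : ℝ, (∀ j, (⌊v j⌋ : ℝ) ≤ v j + t * d j) ∧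
      ∃ j₀, d j₀ < 0 ∧ v j₀ + t * d j₀ = ⌊v j₀⌋ := by
  classical
  -- the largest step that keeps every coordinate above its floor
  obtain ⟨j₀, hj₀, hmin⟩ := exists_min_image {j | d j < 0} (fun j => Int.fract (v j) / -d j)
    (by simpa [Finset.Nonempty] using hd)
  rw [mem_filter] at hj₀
  have hd₀ : 0 < -d j₀ := neg_pos.2 hj₀.2
  refine ⟨Int.fract (v j₀) / -d j₀, fun j => ?_, j₀, hj₀.2, ?_⟩
  · rcases lt_or_ge (d j) 0 with hj | hj
    · have hle := (le_div_iff₀ (neg_pos.2 hj)).1 (hmin j (by simp [hj]))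
      rw [mul_neg, ← Int.self_sub_floor (v j)] at hle
      linarith
    · have := Int.floor_le (v j)
      have : 0 ≤ Int.fract (v j₀) / -d j₀ * d j :=
        mul_nonneg (div_nonneg (Int.fract_nonneg _) hd₀.le) hj
      linarith
  · rw [div_mul_eq_mul_div, div_neg, mul_div_cancel_right₀ _ hj₀.2.ne, Int.fract]
    ring

lemma card_fractSupport_add_mul_lt {v d : κ → ℝ} (hsupp : ∀ j ∉ fractSupport v, d j = 0)
    {t : ℝ} {j₀ : κ} (hj₀ : d j₀ ≠ 0) (hint : v j₀ + t * d j₀ = ⌊v j₀⌋) :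
    #(fractSupport fun j => v j + t * d j) < #(fractSupport v) := by
  classical
  have hmem : j₀ ∈ fractSupport v := by by_contra h; exact hj₀ (hsupp j₀ h)
  refine (card_le_card fun j hj => ?_).trans_lt (card_erase_lt_of_mem hmem)
  rw [mem_fractSupport] at hj
  refine mem_erase.2 ⟨?_, ?_⟩
  · rintro rfl
    simp [hint] at hj
  · by_contra h
    simp_all

omit [Fintype κ] in
lemma two_mul_card_lt_card_of_lt_sum (A : ι → κ → ℝ) {Δ : ℝ} (hA : ∀ i j, 0 ≤ A i j)
    (hcol : ∀ j, ∑ i, A i j ≤ Δ) (hΔ : 0 < Δ) {S : Finset ι} (hS : S.Nonempty) {F : Finset κ}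
    (hheavy : ∀ i ∈ S, 2 * Δ < ∑ j ∈ F, A i j) : 2 * #S < #F := by
  have : 2 * Δ * #S < Δ * #F := calc
    2 * Δ * #S = ∑ _i ∈ S, 2 * Δ := by simp [mul_comm]
    _ < ∑ i ∈ S, ∑ j ∈ F, A i j := sum_lt_sum_of_nonempty hS hheavy
    _ ≤ ∑ i, ∑ j ∈ F, A i j :=
        sum_le_sum_of_subset_of_nonneg (subset_univ _) fun i _ _ => sum_nonneg fun j _ => hA i j
    _ = ∑ j ∈ F, ∑ i, A i j := sum_comm
    _ ≤ ∑ _j ∈ F, Δ := sum_le_sum fun j _ => hcol j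
    _ = Δ * #F := by simp [mul_comm]
  exact_mod_cast (mul_lt_mul_iff_right₀ hΔ).1 (by linarith : Δ * (2 * #S) < Δ * #F)

theorem exists_int_round (A : ι → κ → ℝ) (c : κ → ℝ) {Δ : ℝ} (hA : ∀ i j, 0 ≤ A i j)
    (hc : ∀ j, 0 ≤ c j) (hcol : ∀ j, ∑ i, A i j ≤ Δ) (hΔ : 0 < Δ) (v : κ → ℝ) :
    ∃ z : κ → ℤ, (∀ j, ⌊v j⌋ ≤ z j) ∧ ∑ j, c j * z j ≤ ∑ j, c j * v j ∧
      ∀ i, ∑ j, A i j * v j - 2 * Δ ≤ ∑ j, A i j * z j := by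
  classical
  induction hk : #(fractSupport v) using Nat.strong_induction_on generalizing v with
  | _ k ih =>
  set F := fractSupport v
  by_cases hlight : ∀ i, ∑ j ∈ F, A i j ≤ 2 * Δ
  · refine ⟨fun j => ⌊v j⌋, fun j => le_rfl, ?_, fun i => ?_⟩
    · exact sum_le_sum fun j _ => mul_le_mul_of_nonneg_left (Int.floor_le _) (hc j)
    · linarith [sum_mul_sub_sum_mul_le_sum_fractSupport (z := fun j => ⌊v j⌋) (hA i)
        (fun j => le_rfl), hlight i]
  set S : Finset ι := {i | 2 * Δ < ∑ j ∈ F, A i j}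
  have hS : S.Nonempty := by push Not at hlight; simpa [Finset.Nonempty, S] using hlight
  have hcard : Fintype.card (S ⊕ Unit) < #F := by
    have := two_mul_card_lt_card_of_lt_sum A hA hcol hΔ hS (F := F) (by simp [S])
    have := hS.card_pos
    simp only [Fintype.card_sum, Fintype.card_coe, Fintype.card_unique]
    omega
  obtain ⟨d, hneg, hsupp, horth⟩ :=
    exists_neg_supported_forall_sum_mul_eq_zero (Sum.elim (fun i : S => A i) fun _ => c) F hcard
  obtain ⟨t, hfloor, j₀, hj₀, hint⟩ := exists_floor_le_add_mul_eq_floor v d hneg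
  set w : κ → ℝ := fun j => v j + t * d j
  have hw : ∀ a : κ → ℝ, ∑ j, a j * d j = 0 → ∑ j, a j * w j = ∑ j, a j * v j := fun a ha => by
    simp only [w, mul_add, sum_add_distrib, mul_left_comm _ t, ← mul_sum, ha, mul_zero, add_zero]
  obtain ⟨z, hzw, hcz, hAz⟩ :=
    ih _ (hk ▸ card_fractSupport_add_mul_lt hsupp hj₀.ne hint) w rfl
  have hzv : ∀ j, ⌊v j⌋ ≤ z j := fun j => (Int.le_floor.2 (hfloor j)).trans (hzw j)
  refine ⟨z, hzv, hw c (horth (.inr ())) ▸ hcz, fun i => ?_⟩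
  by_cases hi : i ∈ S
  · simpa [hw (A i) (horth (.inl ⟨i, hi⟩))] using hAz i
  · have : ∑ j ∈ F, A i j ≤ 2 * Δ := by simpa [S] using hi
    linarith [sum_mul_sub_sum_mul_le_sum_fractSupport (hA i) hzv]

theorem exists_nat_cover_cost_le (A : ι → κ → ℝ) (c x : κ → ℝ) {Δ : ℝ} (hA : ∀ i j, 0 ≤ A i j)
    (hc : ∀ j, 0 ≤ c j) (hx : ∀ j, 0 ≤ x j) (hAx : ∀ i, 1 ≤ ∑ j, A i j * x j)
    (hcol : ∀ j, ∑ i, A i j ≤ Δ) (hΔ : 0 < Δ) :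
    ∃ y : κ → ℕ, (∀ i, 1 ≤ ∑ j, A i j * (y j : ℝ)) ∧
      ∑ j, c j * (y j : ℝ) ≤ (1 + 2 * Δ) * ∑ j, c j * x j := by
  obtain ⟨z, hzv, hcost, hrows⟩ := exists_int_round A c hA hc hcol hΔ fun j => (1 + 2 * Δ) * x j
  have hy : ∀ j, ((z j).toNat : ℝ) = z j := fun j => by
    have := Int.floor_nonneg.2 (mul_nonneg (by linarith : (0 : ℝ) ≤ 1 + 2 * Δ) (hx j))
    exact_mod_cast Int.toNat_of_nonneg (this.trans (hzv j))
  simp only [mul_left_comm _ (1 + 2 * Δ), ← mul_sum] at hcost hrows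
  refine ⟨fun j => (z j).toNat, fun i => ?_, ?_⟩
  · simp only [hy]
    nlinarith [hrows i, hAx i]
  · simpa only [hy] using hcost

end Rounding

lemma le_sqrt_mul_log_one_div {Δ : ℝ} (hΔ : 0 < Δ) (hΔe : Δ ≤ Real.exp (-1)) :
    Δ ≤ √(Δ * Real.log (1 / Δ)) := by
  have hlog : 1 ≤ Real.log (1 / Δ) := by
    rw [one_div, Real.log_inv, le_neg, ← Real.log_exp (-1)]
    exact Real.log_le_log hΔ hΔe
  have hΔ1 : Δ ≤ 1 := hΔe.trans (Real.exp_le_one_iff.2 (by norm_num))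
  rw [Real.le_sqrt hΔ.le (by positivity)]
  nlinarith

/-- the regime of small Δ₁ — approximation ratio
`1 + (4+o(1))·√(Δ₁ ln(1/Δ₁))` (Appendix, small `Δ₁`). -/
theorem stmt_7 :
    ∀ η : ℝ, 0 < η →
      ∃ Δstar : ℝ, 0 < Δstar ∧ Δstar < 1 ∧
        ∀ (m n : ℕ) (A : Fin m → Fin n → ℝ) (c x : Fin n → ℝ) (Δ₁ : ℝ),
          (∀ i j, 0 ≤ A i j) →
          (∀ j, 0 ≤ c j) → (∀ j, 0 ≤ x j) →
          (∀ i, 1 ≤ ∑ j, A i j * x j) →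
          IsGreatest (Set.range fun j : Fin n => ∑ i, A i j) Δ₁ →
          0 < Δ₁ → Δ₁ ≤ Δstar →
          ∃ (Ω : Type) (_ : MeasureSpace Ω) (z : Ω → Fin n → ℕ),
            IsProbabilityMeasure (volume : Measure Ω) ∧
            Measurable z ∧
            (∀ᵐ ω ∂(volume : Measure Ω), ∀ i, 1 ≤ ∑ j, A i j * (z ω j : ℝ)) ∧
            ∫⁻ ω, ENNReal.ofReal (∑ j, c j * (z ω j : ℝ)) ≤
              ENNReal.ofReal
                ((1 + (4 + η) * Real.sqrt (Δ₁ * Real.log (1 / Δ₁))) *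
                  ∑ j, c j * x j) := by
  intro η hη
  refine ⟨Real.exp (-1), Real.exp_pos _, Real.exp_lt_one_iff.2 (by norm_num), ?_⟩
  intro m n A c x Δ₁ hA hc hx hAx hmax hΔ hΔe
  obtain ⟨y, hcover, hcost⟩ :=
    exists_nat_cover_cost_le A c x hA hc hx hAx (fun j => hmax.2 ⟨j, rfl⟩) hΔ
  have hratio : 1 + 2 * Δ₁ ≤ 1 + (4 + η) * √(Δ₁ * Real.log (1 / Δ₁)) := by
    nlinarith [le_sqrt_mul_log_one_div hΔ hΔe]
  have hcx : 0 ≤ ∑ j, c j * x j := sum_nonneg fun j _ => mul_nonneg (hc j) (hx j)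
  have : IsProbabilityMeasure (volume : Measure PUnit) := by
    show IsProbabilityMeasure (Measure.dirac PUnit.unit); infer_instance
  refine ⟨PUnit, inferInstance, fun _ => y, this, measurable_const, ae_of_all _ fun _ => hcover, ?_⟩
  rw [lintegral_const, measure_univ, mul_one]
  exact ENNReal.ofReal_le_ofReal (hcost.trans (mul_le_mul_of_nonneg_right hratio hcx))
end

section
/- Let A be an m×n matrix with entries in [0,1], c ∈ ℝ_{≥0}^n, x ∈ ℝ_{≥0}^n, i ∈ [m], and θ ∈ (0,1] such that ∑_{j : A_{i,j} ≥ θ} A_{i,j} x_j ≥ 1/2. Then there exists y ∈ ℝ_{≥0}^n with ∑_{j=1}^n A_{i,j} y_j ≥ 1, ⟨c,y⟩ ≤ (2/θ)·∑_{j=1}^n c_j A_{i,j} x_j, and y ≤ 2x componentwise. -/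
/-- fractional fixing vector for a single covering constraint
(Lemma `heavy-vector`). -/
theorem stmt_10 (m n : ℕ) (A : Fin m → Fin n → ℝ) (c x : Fin n → ℝ)
    (i : Fin m) (θ : ℝ)
    (hA : ∀ i' j, A i' j ∈ Set.Icc (0 : ℝ) 1)
    (hc : ∀ j, 0 ≤ c j) (hx : ∀ j, 0 ≤ x j)
    (hθ : θ ∈ Set.Ioc (0 : ℝ) 1)
    (hbig : 1 / 2 ≤ ∑ j ∈ Finset.univ.filter (fun j => θ ≤ A i j), A i j * x j) :
    ∃ y : Fin n → ℝ,
      (∀ j, 0 ≤ y j) ∧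
      1 ≤ ∑ j, A i j * y j ∧
      ∑ j, c j * y j ≤ (2 / θ) * ∑ j, c j * A i j * x j ∧
      ∀ j, y j ≤ 2 * x j := by
  obtain ⟨hθ0, hθ1⟩ := hθ
  set S := Finset.univ.filter (fun j => θ ≤ A i j) with hS
  refine ⟨fun j => if θ ≤ A i j then 2 * x j else 0, ?_, ?_, ?_, ?_⟩
  · intro j; have := hx j; beta_reduce; split
    · linarith
    · exact le_rfl
  · beta_reduce
    have h1 : ∑ j, A i j * (if θ ≤ A i j then 2 * x j else 0)
        = ∑ j ∈ S, 2 * (A i j * x j) := by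
      rw [hS, Finset.sum_filter]
      apply Finset.sum_congr rfl
      intro j _
      split <;> ring
    rw [h1, ← Finset.mul_sum]
    linarith
  · beta_reduce
    have h1 : ∑ j, c j * (if θ ≤ A i j then 2 * x j else 0)
        = ∑ j ∈ S, 2 * (c j * x j) := by
      rw [hS, Finset.sum_filter]
      apply Finset.sum_congr rfl
      intro j _
      split <;> ring
    rw [h1]
    have h2 : ∑ j ∈ S, 2 * (c j * x j) ≤ ∑ j ∈ S, (2 / θ) * (c j * A i j * x j) := by
      apply Finset.sum_le_sum
      intro j hj
      rw [hS, Finset.mem_filter] at hj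
      have hθA : θ ≤ A i j := hj.2
      have := hc j; have := hx j
      have hcx : 0 ≤ c j * x j := mul_nonneg ‹0 ≤ c j› ‹0 ≤ x j›
      rw [div_mul_eq_mul_div, le_div_iff₀ hθ0]
      calc 2 * (c j * x j) * θ = 2 * θ * (c j * x j) := by ring
        _ ≤ 2 * A i j * (c j * x j) := by
            apply mul_le_mul_of_nonneg_right _ hcx
            linarith
        _ = 2 * (c j * A i j * x j) := by ring
    have h3 : ∑ j ∈ S, (2 / θ) * (c j * A i j * x j)
        ≤ (2 / θ) * ∑ j, c j * A i j * x j := by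
      rw [Finset.mul_sum]
      apply Finset.sum_le_sum_of_subset_of_nonneg (Finset.filter_subset _ _)
      intro j _ _
      have := (hA i j).1
      have := hc j; have := hx j
      positivity
    linarith
  · intro j; beta_reduce; split
    · exact le_rfl
    · have := hx j; linarith
end

section
/- Let A be an m×n matrix with entries in [0,1], c ∈ ℝ_{≥0}^n, x ∈ ℝ_{≥0}^n, i ∈ [m], and θ ∈ (0,1] such that ∑_{j : A_{i,j} ≥ θ} A_{i,j} x_j ≥ 1/2. Then there exists z ∈ ℕ^n with ∑_{j=1}^n A_{i,j} z_j ≥ 1, ⟨c,z⟩ ≤ (4/θ)·∑_{j=1}^n c_j A_{i,j} x_j, and z_j ≤ ⌈4 x_j⌉ for every j ∈ [n]. -/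
/-!
Restrict to the coordinates with `A i j ≥ θ` and put `y = 4 x`, so that `∑ A i j * y j ≥ 2` there.
Round greedily in increasing order of the ratio `c j / A i j`: take `z j = ⌈y j⌉` while the
remaining demand exceeds `A i j * ⌈y j⌉`, then cover the rest with a single coordinate,
overshooting by at most `A i j ≤ 1`. Coverage is bought at the cheapest ratios, so the integral
cost stays below the fractional cost `∑ c j * y j ≤ (4 / θ) * ∑ c j * A i j * x j`.
-/

open Finset

lemma mul_ceil_div_mem_Icc {a T : ℝ} (ha₀ : 0 < a) (ha₁ : a ≤ 1) (hT : 0 ≤ T) :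
    a * ⌈T / a⌉₊ ∈ Set.Icc T (T + 1) := by
  refine ⟨(div_le_iff₀' ha₀).1 (Nat.le_ceil _), ?_⟩
  have := Nat.ceil_lt_add_one (div_nonneg hT ha₀.le)
  calc a * ⌈T / a⌉₊ ≤ a * (T / a + 1) := by gcongr
    _ = T + a := by field_simp
    _ ≤ T + 1 := by linarith

section RoundedCover

variable {ι : Type*} [DecidableEq ι]

lemma sum_mul_natCast_single {S : Finset ι} {j₀ : ι} (hj₀ : j₀ ∈ S) (f : ι → ℝ) (t : ℕ) :
    ∑ j ∈ S, f j * ((Pi.single j₀ t : ι → ℕ) j : ℝ) = f j₀ * t := by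
  simp [Pi.single_apply, hj₀]

lemma sum_insert_mul_natCast_update {s : Finset ι} {j₀ : ι} (hj₀ : j₀ ∉ s) (f : ι → ℝ)
    (z : ι → ℕ) (w : ℕ) :
    ∑ j ∈ insert j₀ s, f j * (Function.update z j₀ w j : ℝ) = f j₀ * w + ∑ j ∈ s, f j * z j := by
  rw [sum_insert hj₀, Function.update_self]
  congr 1
  exact sum_congr rfl fun j hj => by rw [Function.update_of_ne (ne_of_mem_of_not_mem hj hj₀)]

variable (a c y : ι → ℝ)

/-- The greedy invariant: when `ρ` bounds the ratios `c j / a j` on `S` from below, every unit of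
fractional coverage beyond `T + 1` saves at least `ρ` against the fractional cost. -/
def IsRoundedCover (S : Finset ι) (T ρ : ℝ) (z : ι → ℕ) : Prop :=
  (∀ j, z j ≤ ⌈y j⌉₊) ∧ (∀ j ∉ S, z j = 0) ∧ T ≤ ∑ j ∈ S, a j * z j ∧
    ∑ j ∈ S, c j * z j + ρ * (∑ j ∈ S, a j * y j - (T + 1)) ≤ ∑ j ∈ S, c j * y j

variable {a c y}

lemma isRoundedCover_single {S : Finset ι} {j₀ : ι} {T ρ r : ℝ} (hj₀ : j₀ ∈ S)
    (ha₀ : 0 < a j₀) (ha₁ : a j₀ ≤ 1) (hy : ∀ j ∈ S, 0 ≤ y j) (hT : 0 ≤ T)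
    (hfit : T ≤ a j₀ * ⌈y j₀⌉₊) (hρ : 0 ≤ ρ) (hρr : ρ ≤ r) (hcr : c j₀ = r * a j₀)
    (hrc : ∀ j ∈ S, r * a j ≤ c j) (hcover : T + 1 ≤ ∑ j ∈ S, a j * y j) :
    IsRoundedCover a c y S T ρ (Pi.single j₀ ⌈T / a j₀⌉₊) := by
  obtain ⟨hlow, hupp⟩ := mul_ceil_div_mem_Icc ha₀ ha₁ hT
  have hfrac : r * ∑ j ∈ S, a j * y j ≤ ∑ j ∈ S, c j * y j := by
    rw [mul_sum]
    refine sum_le_sum fun j hj => ?_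
    rw [← mul_assoc]
    exact mul_le_mul_of_nonneg_right (hrc j hj) (hy j hj)
  refine ⟨fun j => ?_, fun j hj => ?_, ?_, ?_⟩
  · rcases eq_or_ne j j₀ with rfl | hj
    · rw [Pi.single_eq_same]
      exact Nat.ceil_le.2 ((div_le_iff₀' ha₀).2 hfit)
    · simp [hj]
  · exact Pi.single_eq_of_ne (ne_of_mem_of_not_mem hj₀ hj).symm _
  · rwa [sum_mul_natCast_single hj₀]
  · rw [sum_mul_natCast_single hj₀, hcr]
    calc r * a j₀ * ⌈T / a j₀⌉₊ + ρ * (∑ j ∈ S, a j * y j - (T + 1))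
        ≤ r * (T + 1) + r * (∑ j ∈ S, a j * y j - (T + 1)) := by
          rw [mul_assoc]
          gcongr
          exact hρ.trans hρr
      _ = r * ∑ j ∈ S, a j * y j := by ring
      _ ≤ _ := hfrac

lemma IsRoundedCover.update {s : Finset ι} {j₀ : ι} {T ρ r : ℝ} {z : ι → ℕ} (hj₀ : j₀ ∉ s)
    (hz : IsRoundedCover a c y s (T - a j₀ * ⌈y j₀⌉₊) r z) (ha₀ : 0 ≤ a j₀) (hρr : ρ ≤ r)
    (hcr : c j₀ = r * a j₀) (hcover : T + 1 ≤ ∑ j ∈ insert j₀ s, a j * y j) :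
    IsRoundedCover a c y (insert j₀ s) T ρ (Function.update z j₀ ⌈y j₀⌉₊) := by
  obtain ⟨hzy, hzs, hzcover, hzcost⟩ := hz
  have hyw : a j₀ * y j₀ ≤ a j₀ * ⌈y j₀⌉₊ := by gcongr; exact Nat.le_ceil _
  refine ⟨fun j => ?_, fun j hj => ?_, ?_, ?_⟩
  · rcases eq_or_ne j j₀ with rfl | hj
    · simp
    · simpa [hj] using hzy j
  · rw [Function.update_of_ne (ne_of_mem_of_not_mem (mem_insert_self j₀ s) hj).symm]
    exact hzs j (fun h => hj (mem_insert_of_mem h))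
  · rw [sum_insert_mul_natCast_update hj₀]
    linarith
  · rw [sum_insert hj₀] at hcover
    rw [sum_insert_mul_natCast_update hj₀, sum_insert hj₀, sum_insert hj₀, hcr]
    nlinarith [mul_le_mul_of_nonneg_right hρr (sub_nonneg.2 hcover)]

theorem exists_isRoundedCover (S : Finset ι) (ha : ∀ j ∈ S, 0 < a j ∧ a j ≤ 1)
    (hy : ∀ j ∈ S, 0 ≤ y j) {T ρ : ℝ} (hT : 0 ≤ T) (hρ : 0 ≤ ρ)
    (hρc : ∀ j ∈ S, ρ * a j ≤ c j) (hcover : T + 1 ≤ ∑ j ∈ S, a j * y j) :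
    ∃ z, IsRoundedCover a c y S T ρ z := by
  induction S using Finset.induction_on_min_value (fun j => c j / a j) generalizing T ρ with
  | empty => simp at hcover; linarith
  | insert j₀ s hj₀ hmin ih =>
    obtain ⟨ha₀, ha₁⟩ := ha j₀ (mem_insert_self _ _)
    set r := c j₀ / a j₀
    have hcr : c j₀ = r * a j₀ := (div_mul_cancel₀ _ ha₀.ne').symm
    have hrc : ∀ j ∈ insert j₀ s, r * a j ≤ c j := by
      intro j hj
      rcases mem_insert.1 hj with rfl | hj
      · exact hcr.ge
      · exact (le_div_iff₀ (ha j (mem_insert_of_mem hj)).1).1 (hmin j hj)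
    have hρr : ρ ≤ r := le_of_mul_le_mul_right (hcr ▸ hρc j₀ (mem_insert_self _ _)) ha₀
    by_cases hfit : T ≤ a j₀ * ⌈y j₀⌉₊
    · exact ⟨_, isRoundedCover_single (mem_insert_self j₀ s) ha₀ ha₁ hy hT hfit hρ hρr hcr hrc
        hcover⟩
    · have hyw : a j₀ * y j₀ ≤ a j₀ * ⌈y j₀⌉₊ := by gcongr; exact Nat.le_ceil _
      obtain ⟨z, hz⟩ := ih (fun j hj => ha j (mem_insert_of_mem hj))
        (fun j hj => hy j (mem_insert_of_mem hj)) (T := T - a j₀ * ⌈y j₀⌉₊) (by linarith)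
        (hρ.trans hρr) (fun j hj => hrc j (mem_insert_of_mem hj))
        (by linarith [sum_insert (f := fun j => a j * y j) hj₀])
      exact ⟨_, hz.update hj₀ ha₀.le hρr hcr hcover⟩

end RoundedCover

/-- integral fixing vector for a single covering constraint
(Lemma `l1-fixing-cost`). -/
theorem stmt_11 (m n : ℕ) (A : Fin m → Fin n → ℝ) (c x : Fin n → ℝ)
    (i : Fin m) (θ : ℝ)
    (hA : ∀ i' j, A i' j ∈ Set.Icc (0 : ℝ) 1)
    (hc : ∀ j, 0 ≤ c j) (hx : ∀ j, 0 ≤ x j)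
    (hθ : θ ∈ Set.Ioc (0 : ℝ) 1)
    (hbig : 1 / 2 ≤ ∑ j ∈ Finset.univ.filter (fun j => θ ≤ A i j), A i j * x j) :
    ∃ z : Fin n → ℕ,
      1 ≤ ∑ j, A i j * (z j : ℝ) ∧
      ∑ j, c j * (z j : ℝ) ≤ (4 / θ) * ∑ j, c j * A i j * x j ∧
      ∀ j, z j ≤ ⌈4 * x j⌉₊ := by
  set S := univ.filter fun j => θ ≤ A i j
  have hθS : ∀ j ∈ S, θ ≤ A i j := fun j hj => (mem_filter.1 hj).2
  obtain ⟨z, hz, hzS, hcover, hcost⟩ := exists_isRoundedCover (c := c) (y := fun j => 4 * x j) S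
    (fun j hj => ⟨hθ.1.trans_le (hθS j hj), (hA i j).2⟩) (fun j _ => by linarith [hx j])
    (T := 1) zero_le_one le_rfl (fun j _ => by simpa using hc j)
    (by simp_rw [mul_left_comm _ (4 : ℝ), ← mul_sum]; linarith)
  have hsupp : ∀ f : Fin n → ℝ, ∑ j ∈ S, f j * z j = ∑ j, f j * z j := fun f =>
    sum_subset (subset_univ S) fun j _ hj => by simp [hzS j hj]
  refine ⟨z, hsupp (A i) ▸ hcover, ?_, hz⟩
  calc ∑ j, c j * z j ≤ ∑ j ∈ S, c j * (4 * x j) := by rw [← hsupp]; linarith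
    _ ≤ ∑ j ∈ S, 4 / θ * (c j * A i j * x j) := sum_le_sum fun j hj => by
        calc c j * (4 * x j) = 4 / θ * (c j * θ * x j) := by field_simp [hθ.1.ne']
          _ ≤ 4 / θ * (c j * A i j * x j) := by
            have := hc j; have := hx j; have := hθ.1
            gcongr
            exact hθS j hj
    _ ≤ 4 / θ * ∑ j, c j * A i j * x j := by
        rw [mul_sum]
        refine sum_le_sum_of_subset_of_nonneg (subset_univ S) fun j _ _ => ?_
        have := hc j; have := hx j; have := (hA i j).1; have := hθ.1
        positivity
end

section
/- Let A be an m×n matrix with entries in [0,1] and x ∈ ℝ_{≥0}^n with Ax ≥ 1 componentwise, let α ≥ 1, and let z be the randomized rounding of x at scale α. Fix i ∈ [m] and let a ∈ (0,1] satisfy A_{i,j} ≤ a for all j. Then P[(Az)_i < 1] ≤ exp((1 + ln α − α)/a). In particular, if the ℓ0-column sparsity Δ₀ of A satisfies Δ₀ ≥ 2 and α = ln Δ₀ + ln ln Δ₀ + 4, then P[(Az)_i < 1] ≤ 1/(2Δ₀). -/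
open MeasureTheory ProbabilityTheory Real Finset

/-!
Chernoff's lower-tail method. Write `(Az)_i = ∑ⱼ Xⱼ` with independent `Xⱼ = A_{i,j} z_j`, each
lying in an interval `[cⱼ, cⱼ + a]` with `cⱼ ≥ 0`. By convexity of `exp`, for every `t` one has
`E[exp (t Xⱼ)] ≤ exp (κ E[Xⱼ])` with `κ = (exp (t a) - 1) / a`, and the rounding is unbiased, so
`∑ⱼ E[Xⱼ] = α (Ax)_i ≥ α`. Markov's inequality applied to `exp (t ∑ⱼ Xⱼ)` with `t = -ln α / a`
gives the bound `exp ((1 + ln α - α) / a)`. For `α = ln Δ₀ + ln ln Δ₀ + 4` one checks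
`α - ln α ≥ 1 + ln (2 Δ₀)`, and `a ≤ 1` only strengthens the exponent.
-/

noncomputable def chernoffRate (a t : ℝ) : ℝ := (exp (t * a) - 1) / a

section Chernoff

variable {Ω : Type*} [MeasurableSpace Ω] {μ : Measure Ω} [IsProbabilityMeasure μ] {a t : ℝ}

lemma le_chernoffRate (ha : 0 < a) : t ≤ chernoffRate a t := by
  rw [chernoffRate, le_div_iff₀ ha]
  linarith [add_one_le_exp (t * a)]

lemma chernoffRate_nonpos (ha : 0 < a) (ht : t ≤ 0) : chernoffRate a t ≤ 0 :=
  div_nonpos_of_nonpos_of_nonneg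
    (sub_nonpos.2 (exp_le_one_iff.2 (mul_nonpos_of_nonpos_of_nonneg ht ha.le))) ha.le

lemma exp_mul_le_one_add_chernoffRate_mul (ha : 0 < a) {y : ℝ} (hy : y ∈ Set.Icc 0 a) :
    exp (t * y) ≤ 1 + chernoffRate a t * y := by
  have hconv := convexOn_exp.2 (Set.mem_univ 0) (Set.mem_univ (t * a))
    (sub_nonneg.2 ((div_le_one ha).2 hy.2)) (div_nonneg hy.1 ha.le) (sub_add_cancel 1 (y / a))
  have hya : y / a * (t * a) = t * y := by field_simp
  simp only [smul_eq_mul, mul_zero, zero_add, exp_zero, mul_one, hya] at hconv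
  calc exp (t * y) ≤ 1 - y / a + y / a * exp (t * a) := hconv
    _ = 1 + chernoffRate a t * y := by rw [chernoffRate]; field_simp; ring


lemma mgf_le_exp_chernoffRate_mul_integral {X : Ω → ℝ} {c : ℝ} (hX : AEMeasurable X μ)
    (hc : 0 ≤ c) (ha : 0 < a) (hXc : ∀ᵐ ω ∂μ, X ω ∈ Set.Icc c (c + a)) :
    mgf X μ t ≤ exp (chernoffRate a t * μ[X]) := by
  set κ := chernoffRate a t
  have hint : Integrable X μ := .of_mem_Icc c (c + a) hX hXc
  have haffine : Integrable (fun ω => κ * (X ω - c)) μ :=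
    (hint.sub (integrable_const c)).const_mul κ
  have hpoint : ∀ᵐ ω ∂μ, exp (t * X ω) ≤ exp (κ * c) * (1 + κ * (X ω - c)) := by
    filter_upwards [hXc] with ω hω
    calc exp (t * X ω) = exp (t * c) * exp (t * (X ω - c)) := by rw [← exp_add]; ring_nf
      _ ≤ exp (κ * c) * (1 + κ * (X ω - c)) := by
        gcongr
        · exact le_chernoffRate ha
        · exact exp_mul_le_one_add_chernoffRate_mul ha
            ⟨sub_nonneg.2 hω.1, by linarith [hω.2]⟩
  calc mgf X μ t ≤ ∫ ω, exp (κ * c) * (1 + κ * (X ω - c)) ∂μ :=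
        integral_mono_ae (integrable_exp_mul_of_mem_Icc hX hXc)
          (((integrable_const 1).add haffine).const_mul _) hpoint
    _ = exp (κ * c) * (1 + κ * (μ[X] - c)) := by
        rw [integral_const_mul, integral_add (integrable_const 1) haffine, integral_const_mul,
          integral_sub hint (integrable_const c)]
        simp
    _ ≤ exp (κ * c) * exp (κ * (μ[X] - c)) := by
        gcongr
        linarith [add_one_le_exp (κ * (μ[X] - c))]
    _ = exp (κ * μ[X]) := by rw [← exp_add]; ring_nf

variable {ι : Type*} [Fintype ι] {X : ι → Ω → ℝ} {c : ι → ℝ}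

lemma measureReal_sum_le_le_exp (hind : iIndepFun X μ) (hmeas : ∀ j, Measurable (X j))
    (hc : ∀ j, 0 ≤ c j) (ha : 0 < a) (hX : ∀ j, ∀ᵐ ω ∂μ, X j ω ∈ Set.Icc (c j) (c j + a))
    (ht : t ≤ 0) (ε : ℝ) :
    μ.real {ω | ∑ j, X j ω ≤ ε} ≤ exp (-t * ε + chernoffRate a t * ∑ j, μ[X j]) := by
  have hint := hind.integrable_exp_mul_sum (t := t) hmeas (s := univ)
    fun j _ => integrable_exp_mul_of_mem_Icc (hmeas j).aemeasurable (hX j)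
  have hmarkov := measure_le_le_exp_mul_mgf ε ht hint
  simp only [Finset.sum_apply] at hmarkov
  calc μ.real {ω | ∑ j, X j ω ≤ ε} ≤ exp (-t * ε) * ∏ j, mgf (X j) μ t := by
        rwa [← hind.mgf_sum hmeas]
    _ ≤ exp (-t * ε) * ∏ j, exp (chernoffRate a t * μ[X j]) := by
        gcongr with j
        · exact fun _ _ => mgf_nonneg
        · exact mgf_le_exp_chernoffRate_mul_integral (hmeas j).aemeasurable (hc j) ha (hX j)
    _ = exp (-t * ε + chernoffRate a t * ∑ j, μ[X j]) := by
        rw [← exp_sum, ← exp_add, mul_sum]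

lemma measureReal_sum_le_one_le_exp (hind : iIndepFun X μ) (hmeas : ∀ j, Measurable (X j))
    (hc : ∀ j, 0 ≤ c j) (ha : 0 < a) (hX : ∀ j, ∀ᵐ ω ∂μ, X j ω ∈ Set.Icc (c j) (c j + a))
    {α : ℝ} (hα : 1 ≤ α) (hmean : α ≤ ∑ j, μ[X j]) :
    μ.real {ω | ∑ j, X j ω ≤ 1} ≤ exp ((1 + log α - α) / a) := by
  set t := -(log α / a) with ht_def
  have ht : t ≤ 0 := neg_nonpos.2 (div_nonneg (log_nonneg hα) ha.le)
  have hκ : chernoffRate a t = (α⁻¹ - 1) / a := by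
    rw [chernoffRate, neg_mul, div_mul_cancel₀ _ ha.ne', exp_neg, exp_log (by linarith)]
  refine (measureReal_sum_le_le_exp hind hmeas hc ha hX ht 1).trans (exp_le_exp.2 ?_)
  calc -t * 1 + chernoffRate a t * ∑ j, μ[X j] ≤ -t * 1 + chernoffRate a t * α := by
        linarith [mul_le_mul_of_nonpos_left hmean (chernoffRate_nonpos ha ht)]
    _ = (1 + log α - α) / a := by rw [hκ, ht_def]; field_simp; ring

lemma integral_natFloor_add_eq_self {Y : Ω → ℕ} {v : ℝ} (hv : 0 ≤ v) (hY : Measurable Y)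
    (hY1 : ∀ ω, Y ω ≤ 1) (hP : μ {ω | Y ω = 1} = ENNReal.ofReal (v - ⌊v⌋₊)) :
    ∫ ω, ((⌊v⌋₊ : ℝ) + Y ω) ∂μ = v := by
  have hs : MeasurableSet {ω | Y ω = 1} := hY (measurableSet_singleton 1)
  have hY_eq : ∀ ω, (Y ω : ℝ) = {ω | Y ω = 1}.indicator 1 ω := fun ω => by
    rcases Nat.le_one_iff_eq_zero_or_eq_one.1 (hY1 ω) with h | h <;> simp [h]
  simp_rw [hY_eq]
  rw [integral_add (integrable_const _) ((integrable_const 1).indicator hs),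
    integral_indicator_one hs]
  simp [measureReal_def, hP, sub_nonneg.2 (Nat.floor_le hv)]

lemma measure_sum_mul_natFloor_add_lt_one_le {w x : ι → ℝ} {Y : ι → Ω → ℕ} {α : ℝ}
    (hw : ∀ j, w j ∈ Set.Icc 0 a) (ha : 0 < a) (hx : ∀ j, 0 ≤ x j)
    (hwx : 1 ≤ ∑ j, w j * x j) (hα : 1 ≤ α) (hYmeas : ∀ j, Measurable (Y j))
    (hY1 : ∀ j ω, Y j ω ≤ 1) (hYind : iIndepFun Y μ)
    (hYber : ∀ j, μ {ω | Y j ω = 1} = ENNReal.ofReal (α * x j - ⌊α * x j⌋₊)) :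
    μ {ω | ∑ j, w j * ((⌊α * x j⌋₊ + Y j ω : ℕ) : ℝ) < 1} ≤
      ENNReal.ofReal (exp ((1 + log α - α) / a)) := by
  set X : ι → Ω → ℝ := fun j ω => w j * ((⌊α * x j⌋₊ : ℝ) + Y j ω)
  have hXind : iIndepFun X μ :=
    hYind.comp (fun j k => w j * ((⌊α * x j⌋₊ : ℝ) + k)) fun _ => measurable_from_top
  have hXmeas : ∀ j, Measurable (X j) := fun j => by
    have := hYmeas j
    fun_prop
  have hXrange : ∀ j, ∀ᵐ ω ∂μ, X j ω ∈ Set.Icc (w j * ⌊α * x j⌋₊) (w j * ⌊α * x j⌋₊ + a) :=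
    fun j => ae_of_all _ fun ω => by
      have hY1' : (Y j ω : ℝ) ≤ 1 := by exact_mod_cast hY1 j ω
      constructor <;> nlinarith [(hw j).1, (hw j).2, (Y j ω).cast_nonneg (α := ℝ)]
  have hmean : α ≤ ∑ j, μ[X j] := calc
    α ≤ α * ∑ j, w j * x j := le_mul_of_one_le_right (by linarith) hwx
    _ = ∑ j, μ[X j] := by
      simp only [X, integral_const_mul, mul_sum]
      refine sum_congr rfl fun j _ => ?_
      rw [integral_natFloor_add_eq_self (mul_nonneg (by linarith) (hx j)) (hYmeas j) (hY1 j)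
        (hYber j)]
      ring
  rw [ENNReal.le_ofReal_iff_toReal_le (measure_ne_top _ _) (exp_pos _).le]
  refine le_trans ?_ (measureReal_sum_le_one_le_exp hXind hXmeas
    (fun j => mul_nonneg (hw j).1 (Nat.cast_nonneg _)) ha hXrange hα hmean)
  exact measureReal_mono fun ω hω => by
    simp only [Set.mem_ofPred_eq, Nat.cast_add, X] at hω ⊢
    exact hω.le

end Chernoff

lemma one_add_log_sub_le_neg_log_two_mul {Δ α : ℝ} (hΔ : 2 ≤ Δ)
    (hα : α = log Δ + log (log Δ) + 4) : 1 + log α - α ≤ -log (2 * Δ) := by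
  set L := log Δ
  have hL : log 2 ≤ L := log_le_log two_pos hΔ
  have hlog2 := log_two_gt_d9
  have hL0 : 0 < L := by linarith
  have he3 : 19 < exp 3 := calc
    (19 : ℝ) < 2.7182818283 ^ 3 := by norm_num
    _ ≤ exp 1 ^ 3 := by gcongr; exact exp_one_gt_d9.le
    _ = exp 3 := by rw [← exp_nat_mul]; norm_num
  -- `α ≤ 2 L + 3` by `log L ≤ L - 1`, and `2 L + 3 ≤ e³ L / 2` as `L ≥ log 2`.
  have hαle : α ≤ L * exp 3 / 2 := by
    nlinarith [log_le_sub_one_of_pos hL0]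
  have hα0 : 0 < α := by
    have hhalf : log (1 / 2) ≤ log L := log_le_log one_half_pos (by linarith)
    rw [one_div, log_inv] at hhalf
    linarith [log_two_lt_d9]
  have hlogα : log α ≤ log L + 3 - log 2 := calc
    log α ≤ log (L * exp 3 / 2) := log_le_log hα0 hαle
    _ = log L + 3 - log 2 := by
      rw [log_div (by positivity) two_ne_zero, log_mul hL0.ne' (exp_pos 3).ne', log_exp]
  rw [log_mul two_ne_zero (by positivity)]
  linarith

lemma exp_one_add_log_sub_div_le_one_div_two_mul {a Δ α : ℝ} (ha : a ∈ Set.Ioc 0 1) (hΔ : 2 ≤ Δ)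
    (hα : α = log Δ + log (log Δ) + 4) : exp ((1 + log α - α) / a) ≤ 1 / (2 * Δ) := by
  have hexponent := one_add_log_sub_le_neg_log_two_mul hΔ hα
  have hlog : 0 < log (2 * Δ) := log_pos (by linarith)
  calc exp ((1 + log α - α) / a) ≤ exp (-log (2 * Δ)) := by
        gcongr
        rw [div_le_iff₀ ha.1]
        nlinarith [ha.2]
    _ = 1 / (2 * Δ) := by rw [exp_neg, exp_log (by positivity), one_div]

/-- Chernoff-based concentration for the randomized rounding step,
ℓ0-version (Lemma `basic-concentration`). -/
theorem stmt_12 (m n : ℕ) (A : Fin m → Fin n → ℝ) (x : Fin n → ℝ) (α : ℝ)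
    (Ω : Type*) [MeasurableSpace Ω] (P : Measure Ω) [IsProbabilityMeasure P]
    (Y : Fin n → Ω → ℕ) (z : Ω → Fin n → ℕ)
    (hA : ∀ i j, A i j ∈ Set.Icc (0 : ℝ) 1)
    (hx : ∀ j, 0 ≤ x j)
    (hAx : ∀ i, 1 ≤ ∑ j, A i j * x j)
    (hα : 1 ≤ α)
    (hYmeas : ∀ j, Measurable (Y j))
    (hY01 : ∀ j ω, Y j ω ≤ 1)
    (hYind : iIndepFun Y P)
    (hYber : ∀ j, P {ω | Y j ω = 1} = ENNReal.ofReal (α * x j - (⌊α * x j⌋₊ : ℝ)))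
    (hz : ∀ ω j, z ω j = ⌊α * x j⌋₊ + Y j ω)
    (i : Fin m) (a : ℝ) (ha : a ∈ Set.Ioc (0 : ℝ) 1)
    (haA : ∀ j, A i j ≤ a) :
    P {ω | ∑ j, A i j * (z ω j : ℝ) < 1} ≤
        ENNReal.ofReal (Real.exp ((1 + Real.log α - α) / a)) ∧
      ∀ Δ₀ : ℕ,
        Δ₀ = (Finset.univ.sup fun j : Fin n =>
          (Finset.univ.filter fun i' : Fin m => A i' j ≠ 0).card) →
        2 ≤ Δ₀ →
        α = Real.log Δ₀ + Real.log (Real.log Δ₀) + 4 →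
        P {ω | ∑ j, A i j * (z ω j : ℝ) < 1} ≤
          ENNReal.ofReal (1 / (2 * (Δ₀ : ℝ))) := by
  have hbound : P {ω | ∑ j, A i j * (z ω j : ℝ) < 1} ≤
      ENNReal.ofReal (exp ((1 + log α - α) / a)) := by
    simp only [hz]
    exact measure_sum_mul_natFloor_add_lt_one_le (fun j => ⟨(hA i j).1, haA j⟩) ha.1 hx (hAx i)
      hα hYmeas hY01 hYind hYber
  refine ⟨hbound, fun Δ₀ _ hΔ₀ hαΔ₀ => hbound.trans (ENNReal.ofReal_le_ofReal ?_)⟩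
  exact exp_one_add_log_sub_div_le_one_div_two_mul ha (by exact_mod_cast hΔ₀) hαΔ₀
end

section
/- Let A be an m×n matrix with entries in [0,1] and x ∈ ℝ_{≥0}^n, let α ≥ 2, and let z be the randomized rounding of x at scale α. Fix i ∈ [m] and let θ ∈ (0,1] satisfy ∑_{j : A_{i,j} ≤ θ} A_{i,j} x_j ≥ 1/2. Then P[(Az)_i < 1] ≤ exp((1 + ln(α/2) − α/2)/θ). -/
/-!
Only the coordinates with `A i j ≤ θ` are kept. After division by `θ` their coefficients lie in
`[0, 1]`, and for such a coefficient `b` the variable `b (⌊v⌋ + Bernoulli (v - ⌊v⌋))` has moment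
generating function at most `exp (b v (eᵗ - 1))`, that of a Poisson variable of mean `b v`
(convexity of `exp` and `1 + u ≤ eᵘ`). Hence the rescaled sum is dominated, for `t ≤ 0`, by a
Poisson variable of mean at least `M = α / (2θ)`, and the Chernoff lower tail at `a = 1/θ`
with `t = log (a / M)` gives `exp (a - M + a log (M / a)) = exp ((1 + log (α/2) - α/2) / θ)`.
-/

open MeasureTheory ProbabilityTheory Real

lemma comp_eq_const_add_indicator_of_le_one {Ω : Type*} {Y : Ω → ℕ} (hY : ∀ ω, Y ω ≤ 1)
    (g : ℕ → ℝ) :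
    (fun ω => g (Y ω)) = fun ω => g 0 + {ω | Y ω = 1}.indicator (fun _ => g 1 - g 0) ω := by
  funext ω
  rcases Nat.le_one_iff_eq_zero_or_eq_one.mp (hY ω) with h | h <;> simp [h]

namespace ProbabilityTheory

variable {Ω : Type*} [MeasurableSpace Ω] {P : Measure Ω} [IsProbabilityMeasure P]

lemma integral_comp_of_le_one {Y : Ω → ℕ} (hYm : Measurable Y) (hY : ∀ ω, Y ω ≤ 1)
    (g : ℕ → ℝ) :
    ∫ ω, g (Y ω) ∂P = g 0 * (1 - P.real {ω | Y ω = 1}) + g 1 * P.real {ω | Y ω = 1} := by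
  have hS : MeasurableSet {ω | Y ω = 1} := hYm (measurableSet_singleton 1)
  rw [comp_eq_const_add_indicator_of_le_one hY,
    integral_add (integrable_const _) ((integrable_const _).indicator hS),
    integral_const, integral_indicator_const _ hS]
  simp only [probReal_univ, smul_eq_mul]
  ring

lemma exp_mul_sub_one_le_mul {b : ℝ} (hb0 : 0 ≤ b) (hb1 : b ≤ 1) (t : ℝ) :
    exp (t * b) - 1 ≤ b * (exp t - 1) := by
  have h := convexOn_exp.2 (Set.mem_univ 0) (Set.mem_univ t) (sub_nonneg.2 hb1) hb0 (by ring)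
  simp only [smul_eq_mul, mul_zero, zero_add, exp_zero, mul_one] at h
  rw [mul_comm t b]
  linarith

lemma mgf_mul_add_le {Y : Ω → ℕ} (hYm : Measurable Y) (hY : ∀ ω, Y ω ≤ 1) {b k : ℝ}
    (hb0 : 0 ≤ b) (hb1 : b ≤ 1) (hk : 0 ≤ k) (t : ℝ) :
    mgf (fun ω => b * (k + Y ω)) P t ≤
      exp ((k + P.real {ω | Y ω = 1}) * (b * (exp t - 1))) := by
  set p := P.real {ω | Y ω = 1}
  have hp0 : 0 ≤ p := measureReal_nonneg
  have hp1 : p ≤ 1 := measureReal_le_one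
  have hmgf :
      mgf (fun ω => b * (k + Y ω)) P t = exp (t * b * k) * (1 + p * (exp (t * b) - 1)) := by
    rw [mgf, integral_comp_of_le_one hYm hY (fun y : ℕ => exp (t * (b * (k + y))))]
    simp only [Nat.cast_zero, Nat.cast_one, add_zero]
    rw [show t * (b * (k + 1)) = t * b * k + t * b by ring, exp_add,
      show t * (b * k) = t * b * k by ring]
    ring
  have hk_exp : t * b * k ≤ k * (exp (t * b) - 1) := by
    nlinarith [add_one_le_exp (t * b)]
  have hp_exp : 1 + p * (exp (t * b) - 1) ≤ exp (p * (exp (t * b) - 1)) := by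
    linarith [add_one_le_exp (p * (exp (t * b) - 1))]
  calc mgf (fun ω => b * (k + Y ω)) P t
      ≤ exp (k * (exp (t * b) - 1)) * exp (p * (exp (t * b) - 1)) := by
        rw [hmgf]
        exact mul_le_mul (exp_le_exp.2 hk_exp) hp_exp
          (by nlinarith [exp_pos (t * b)]) (exp_nonneg _)
    _ = exp ((k + p) * (exp (t * b) - 1)) := by rw [← exp_add]; ring_nf
    _ ≤ exp ((k + p) * (b * (exp t - 1))) :=
        exp_le_exp.2 (mul_le_mul_of_nonneg_left (exp_mul_sub_one_le_mul hb0 hb1 t) (by linarith))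

lemma mgf_mul_floor_add_le {Y : Ω → ℕ} (hYm : Measurable Y) (hY : ∀ ω, Y ω ≤ 1) {v b : ℝ}
    (hYv : P {ω | Y ω = 1} = ENNReal.ofReal (v - ⌊v⌋₊)) (hv : 0 ≤ v) (hb0 : 0 ≤ b) (hb1 : b ≤ 1)
    (t : ℝ) : mgf (fun ω => b * (⌊v⌋₊ + Y ω)) P t ≤ exp (v * b * (exp t - 1)) := by
  have hfloor_add : (⌊v⌋₊ : ℝ) + P.real {ω | Y ω = 1} = v := by
    rw [measureReal_def, hYv, ENNReal.toReal_ofReal (sub_nonneg.2 (Nat.floor_le hv))]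
    ring
  have h := mgf_mul_add_le (P := P) hYm hY hb0 hb1 (Nat.cast_nonneg ⌊v⌋₊) t
  rwa [hfloor_add, ← mul_assoc] at h

lemma integrable_exp_mul_of_nonneg {X : Ω → ℝ} (hXm : Measurable X) (hX : ∀ ω, 0 ≤ X ω)
    {t : ℝ} (ht : t ≤ 0) : Integrable (fun ω => exp (t * X ω)) P :=
  .of_bound (by fun_prop) 1 (.of_forall fun ω => by
    rw [norm_of_nonneg (exp_nonneg _), exp_le_one_iff]
    exact mul_nonpos_of_nonpos_of_nonneg ht (hX ω))

variable {ι : Type*} {X : ι → Ω → ℝ}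

lemma iIndepFun.measureReal_sum_le_le_exp (hind : iIndepFun X P) (hXm : ∀ j, Measurable (X j))
    (hX : ∀ j ω, 0 ≤ X j ω) (s : Finset ι) {t : ℝ} (ht : t ≤ 0) {c : ι → ℝ}
    (hc : ∀ j ∈ s, mgf (X j) P t ≤ exp (c j)) (a : ℝ) :
    P.real {ω | ∑ j ∈ s, X j ω ≤ a} ≤ exp (-t * a + ∑ j ∈ s, c j) := by
  have hint := hind.integrable_exp_mul_sum hXm
    (s := s) fun j _ => integrable_exp_mul_of_nonneg (hXm j) (hX j) ht
  calc P.real {ω | ∑ j ∈ s, X j ω ≤ a}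
      = P.real {ω | (∑ j ∈ s, X j) ω ≤ a} := by simp only [Finset.sum_apply]
    _ ≤ exp (-t * a) * ∏ j ∈ s, mgf (X j) P t := by
        rw [← hind.mgf_sum hXm]; exact measure_le_le_exp_mul_mgf a ht hint
    _ ≤ exp (-t * a) * ∏ j ∈ s, exp (c j) := by
        gcongr with j hj
        · exact fun j _ => mgf_nonneg
        · exact hc j hj
    _ = exp (-t * a + ∑ j ∈ s, c j) := by rw [exp_add, exp_sum]

lemma iIndepFun.measureReal_sum_le_le_exp_poisson (hind : iIndepFun X P)
    (hXm : ∀ j, Measurable (X j)) (hX : ∀ j ω, 0 ≤ X j ω) (s : Finset ι) {c : ι → ℝ}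
    (hc : ∀ j ∈ s, ∀ t ≤ 0, mgf (X j) P t ≤ exp (c j * (exp t - 1)))
    {a M : ℝ} (ha : 0 < a) (haM : a ≤ M) (hM : M ≤ ∑ j ∈ s, c j) :
    P.real {ω | ∑ j ∈ s, X j ω ≤ a} ≤ exp (a - M + a * log (M / a)) := by
  have hM0 : 0 < M := ha.trans_le haM
  have ht : log (a / M) ≤ 0 := log_nonpos (by positivity) ((div_le_one hM0).2 haM)
  refine (hind.measureReal_sum_le_le_exp hXm hX s ht (fun j hj => hc j hj _ ht) a).trans ?_
  rw [exp_log (by positivity), ← Finset.sum_mul, log_div ha.ne' hM0.ne', log_div hM0.ne' ha.ne']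
  have hneg : a / M - 1 ≤ 0 := by rw [sub_nonpos, div_le_one hM0]; exact haM
  have hsum := mul_le_mul_of_nonpos_right hM hneg
  rw [show M * (a / M - 1) = a - M by field_simp] at hsum
  exact exp_le_exp.2 (by linarith)

end ProbabilityTheory

/-- Chernoff-based concentration for the randomized rounding step
restricted to θ-small coefficients (Lemma `median-concentration`). -/
theorem stmt_13 (m n : ℕ) (A : Fin m → Fin n → ℝ) (x : Fin n → ℝ) (α : ℝ)
    (Ω : Type*) [MeasurableSpace Ω] (P : Measure Ω) [IsProbabilityMeasure P]
    (Y : Fin n → Ω → ℕ) (z : Ω → Fin n → ℕ)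
    (hA : ∀ i j, A i j ∈ Set.Icc (0 : ℝ) 1)
    (hx : ∀ j, 0 ≤ x j)
    (hα : 2 ≤ α)
    (hYmeas : ∀ j, Measurable (Y j))
    (hY01 : ∀ j ω, Y j ω ≤ 1)
    (hYind : iIndepFun Y P)
    (hYber : ∀ j, P {ω | Y j ω = 1} = ENNReal.ofReal (α * x j - (⌊α * x j⌋₊ : ℝ)))
    (hz : ∀ ω j, z ω j = ⌊α * x j⌋₊ + Y j ω)
    (i : Fin m) (θ : ℝ) (hθ : θ ∈ Set.Ioc (0 : ℝ) 1)
    (hsmall : 1 / 2 ≤ ∑ j ∈ Finset.univ.filter (fun j => A i j ≤ θ), A i j * x j) :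
    P {ω | ∑ j, A i j * (z ω j : ℝ) < 1} ≤
      ENNReal.ofReal (Real.exp ((1 + Real.log (α / 2) - α / 2) / θ)) := by
  obtain ⟨hθ0, -⟩ := hθ
  set F := Finset.univ.filter (fun j => A i j ≤ θ)
  have hb0 : ∀ j, 0 ≤ A i j / θ := fun j => div_nonneg (hA i j).1 hθ0.le
  set X : Fin n → Ω → ℝ := fun j ω => A i j / θ * ((⌊α * x j⌋₊ : ℝ) + Y j ω)
  have hXm : ∀ j, Measurable (X j) := fun j => by fun_prop
  have hX : ∀ j ω, 0 ≤ X j ω := fun j ω => mul_nonneg (hb0 j) (by positivity)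
  have hind : iIndepFun X P := hYind.comp (fun j (y : ℕ) => A i j / θ * ((⌊α * x j⌋₊ : ℝ) + y))
    fun j => measurable_from_top
  have hmgf : ∀ j ∈ F, ∀ t ≤ 0, mgf (X j) P t ≤ exp (α * x j * (A i j / θ) * (exp t - 1)) :=
    fun j hj t _ => mgf_mul_floor_add_le (hYmeas j) (hY01 j) (hYber j)
      (mul_nonneg (by linarith) (hx j)) (hb0 j)
      (div_le_one_of_le₀ (Finset.mem_filter.1 hj).2 hθ0.le) t
  have hmass : α / (2 * θ) ≤ ∑ j ∈ F, α * x j * (A i j / θ) := by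
    rw [show ∑ j ∈ F, α * x j * (A i j / θ) = α / θ * ∑ j ∈ F, A i j * x j by
      rw [Finset.mul_sum]; exact Finset.sum_congr rfl fun j _ => by ring]
    calc α / (2 * θ) = α / θ * (1 / 2) := by ring
      _ ≤ _ := by gcongr
  have hevent : {ω | ∑ j, A i j * (z ω j : ℝ) < 1} ⊆ {ω | ∑ j ∈ F, X j ω ≤ 1 / θ} := by
    intro ω hω
    have hXz : ∀ j, X j ω = A i j * z ω j / θ := fun j => by
      simp only [X, hz ω j]; push_cast; ring
    simp only [Set.mem_ofPred_eq, hXz, ← Finset.sum_div] at hω ⊢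
    rw [div_le_div_iff_of_pos_right hθ0]
    refine (Finset.sum_le_sum_of_subset_of_nonneg (Finset.subset_univ F) fun j _ _ => ?_).trans
      hω.le
    exact mul_nonneg (hA i j).1 (Nat.cast_nonneg _)
  have htail := hind.measureReal_sum_le_le_exp_poisson hXm hX F hmgf (one_div_pos.2 hθ0)
    (by rw [div_le_div_iff₀ hθ0 (by positivity)]; nlinarith) hmass
  rw [show 1 / θ - α / (2 * θ) + 1 / θ * log (α / (2 * θ) / (1 / θ)) =
      (1 + log (α / 2) - α / 2) / θ by field_simp; ring] at htail
  exact (measure_mono hevent).trans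
    ((ENNReal.le_ofReal_iff_toReal_le (measure_ne_top _ _) (exp_nonneg _)).2 htail)
end

section
/- There exist universal constants c₀ ≥ 0 and C ≥ 1 with the following property. Let A be an m×n matrix with entries in [0,1] whose maximum column sum Δ₁ satisfies Δ₁ ≥ e, let x ∈ ℝ_{≥0}^n satisfy Ax ≥ 1 componentwise, set α = ln Δ₁ + ln ln Δ₁ + c₀, and let z be the randomized rounding of x at scale α. Fix i ∈ [m] and let θ ∈ (0,1] satisfy both ∑_{j : A_{i,j} ≥ θ} A_{i,j} x_j ≥ 1/2 and ∑_{j : A_{i,j} ≤ θ} A_{i,j} x_j ≥ 1/2. Then P[(Az)_i < 1] ≤ C·θ/Δ₁. -/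
/-!
A Chernoff bound for the lower tail with parameter `s = ln α / θ`. The rounded coordinate
`a_j z_j` has `E e^{-s a_j z_j} ≤ exp (-α x_j (1 - e^{-s a_j}))`, and by concavity of
`a ↦ 1 - e^{-s a}` this exponent is at least `(1 - 1/α) a_j x_j / θ` when `a_j ≤ θ` and at least
`(1 - 1/α) a_j x_j` in general. Since the light entries carry half of the row, the failure
probability is at most `exp (ln α / θ - (α - 1)(1 + 1/θ)/2)`, which is at most `θ / Δ₁` as soon as
`α ≥ 2 ln α + 3` and `α ≥ ln α + ln Δ₁ + 1`; both hold for `c₀ = 10`, so `C = 1` works.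
-/

open MeasureTheory ProbabilityTheory Real

lemma mul_one_sub_exp_neg_le {s a b : ℝ} (ha : 0 ≤ a) (hab : a ≤ b) :
    a * (1 - exp (-(s * b))) ≤ b * (1 - exp (-(s * a))) := by
  rcases ha.eq_or_lt with rfl | ha
  · simp
  have hb : 0 < b := ha.trans_le hab
  have key := convexOn_exp.2 (Set.mem_univ 0) (Set.mem_univ (-(s * b)))
    (sub_nonneg.2 ((div_le_one hb).2 hab)) (div_nonneg ha.le hb.le) (by ring)
  simp only [smul_eq_mul, mul_zero, zero_add, exp_zero, mul_one] at key
  rw [show a / b * -(s * b) = -(s * a) by field_simp] at key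
  have := mul_le_mul_of_nonneg_left key hb.le
  rw [mul_add, mul_sub, mul_one, ← mul_assoc, mul_div_cancel₀ _ hb.ne'] at this
  linarith

lemma one_sub_inv_mul_le_one_sub_exp_neg {α θ a : ℝ} (hα : 1 ≤ α) (hθ : θ ∈ Set.Ioc 0 1)
    (ha : a ∈ Set.Icc 0 1) :
    (1 - α⁻¹) * (a + if a ≤ θ then (θ⁻¹ - 1) * a else 0) ≤ 1 - exp (-(log α / θ * a)) := by
  obtain ⟨hθ0, hθ1⟩ := hθ
  split_ifs with hlight
  · have h := mul_one_sub_exp_neg_le (s := log α / θ) ha.1 hlight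
    rw [div_mul_cancel₀ _ hθ0.ne', exp_neg, exp_log (by linarith)] at h
    calc (1 - α⁻¹) * (a + (θ⁻¹ - 1) * a) = a * (1 - α⁻¹) / θ := by field_simp; ring
      _ ≤ _ := by rwa [div_le_iff₀' hθ0]
  · have h := mul_one_sub_exp_neg_le (s := log α / θ) ha.1 ha.2
    have hexp : exp (-(log α / θ * 1)) ≤ α⁻¹ :=
      calc _ ≤ exp (-log α) := by
            rw [mul_one]; exact exp_le_exp.2 (neg_le_neg (le_div_self (log_nonneg hα) hθ0 hθ1))
        _ = α⁻¹ := by rw [exp_neg, exp_log (by linarith)]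
    nlinarith [ha.1]

lemma half_mul_le_sum_mul_one_sub_exp_neg {ι : Type*} [Fintype ι] {a x : ι → ℝ}
    (ha : ∀ j, a j ∈ Set.Icc 0 1) (hx : ∀ j, 0 ≤ x j) {α θ : ℝ} (hα : 1 ≤ α)
    (hθ : θ ∈ Set.Ioc 0 1) (hsum : 1 ≤ ∑ j, a j * x j)
    (hlight : 1 / 2 ≤ ∑ j ∈ Finset.univ.filter (fun j => a j ≤ θ), a j * x j) :
    (α - 1) * (1 + θ⁻¹) / 2 ≤ ∑ j, α * x j * (1 - exp (-(log α / θ * a j))) := by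
  have hT : 1 ≤ θ⁻¹ := one_le_inv_iff₀.2 hθ
  calc (α - 1) * (1 + θ⁻¹) / 2
      ≤ (α - 1) * (∑ j, a j * x j +
          (θ⁻¹ - 1) * ∑ j ∈ Finset.univ.filter (fun j => a j ≤ θ), a j * x j) := by
        have : 0 ≤ (θ⁻¹ - 1) * (∑ j ∈ Finset.univ.filter (fun j => a j ≤ θ), a j * x j - 1 / 2) :=
          mul_nonneg (by linarith) (by linarith)
        nlinarith
    _ = ∑ j, α * x j * ((1 - α⁻¹) * (a j + if a j ≤ θ then (θ⁻¹ - 1) * a j else 0)) := by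
        rw [Finset.sum_filter, Finset.mul_sum, ← Finset.sum_add_distrib, Finset.mul_sum]
        refine Finset.sum_congr rfl fun j _ => ?_
        have : α ≠ 0 := by positivity
        split_ifs <;> field_simp; ring
    _ ≤ _ := by
        gcongr with j
        · exact mul_nonneg (by linarith) (hx j)
        · exact one_sub_inv_mul_le_one_sub_exp_neg hα hθ (ha j)

section
variable {Ω : Type*} [MeasurableSpace Ω] {P : Measure Ω} [IsProbabilityMeasure P]

lemma mgf_neg_mul_add_bernoulli_le {Y : Ω → ℕ} (hY : Measurable Y) (hY1 : ∀ ω, Y ω ≤ 1)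
    {k a s : ℝ} (hk : 0 ≤ k) (hsa : 0 ≤ s * a) :
    mgf (fun ω => a * (k + Y ω)) P (-s) ≤
      exp (-((k + P.real {ω | Y ω = 1}) * (1 - exp (-(s * a))))) := by
  set g := 1 - exp (-(s * a))
  set p := P.real {ω | Y ω = 1}
  have hE : MeasurableSet {ω | Y ω = 1} := hY (measurableSet_singleton 1)
  have hrep : (fun ω => exp (-s * (a * (k + Y ω)))) =
      fun ω => exp (-(s * a) * k) * (1 - {ω | Y ω = 1}.indicator (fun _ => g) ω) := by
    funext ω
    rcases Nat.le_one_iff_eq_zero_or_eq_one.1 (hY1 ω) with h | h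
    · rw [Set.indicator_of_notMem (by simp [h]), h]
      ring_nf
    · rw [Set.indicator_of_mem (show ω ∈ {ω | Y ω = 1} from h), h, sub_sub_cancel, ← exp_add]
      ring_nf
  have hmgf : mgf (fun ω => a * (k + Y ω)) P (-s) = exp (-(s * a) * k) * (1 - p * g) := by
    rw [mgf, hrep, integral_const_mul,
      integral_sub (integrable_const 1) ((integrable_const g).indicator hE),
      integral_indicator_const _ hE]
    simp [p]
  have hg : 0 ≤ g := sub_nonneg.2 (exp_le_one_iff.2 (neg_nonpos.2 hsa))
  rw [hmgf, add_mul, neg_add, exp_add]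
  calc exp (-(s * a) * k) * (1 - p * g) ≤ exp (-(s * a) * k) * exp (-(p * g)) := by
        gcongr; linarith [one_sub_le_exp_neg (p * g)]
    _ ≤ exp (-(k * g)) * exp (-(p * g)) := by
        gcongr; nlinarith [one_sub_le_exp_neg (s * a)]

lemma measureReal_sum_le_le_exp_mul_prod_mgf {ι : Type*} [Fintype ι] {X : ι → Ω → ℝ}
    (hind : iIndepFun X P) (hmeas : ∀ j, Measurable (X j)) (hX : ∀ j ω, 0 ≤ X j ω)
    {s : ℝ} (hs : 0 ≤ s) (ε : ℝ) :
    P.real {ω | ∑ j, X j ω ≤ ε} ≤ exp (s * ε) * ∏ j, mgf (X j) P (-s) := by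
  have hint : ∀ j ∈ Finset.univ, Integrable (fun ω => exp (-s * X j ω)) P := fun j _ =>
    .of_bound ((hmeas j).const_mul _).exp.aestronglyMeasurable 1 <| ae_of_all _ fun ω => by
      rw [norm_of_nonneg (exp_pos _).le, exp_le_one_iff]
      nlinarith [hX j ω]
  have := measure_le_le_exp_mul_mgf ε (neg_nonpos.2 hs) (hind.integrable_exp_mul_sum hmeas hint)
  rw [hind.mgf_sum hmeas, neg_neg] at this
  simpa only [Finset.sum_apply] using this

lemma measureReal_sum_floor_add_le_le_exp {ι : Type*} [Fintype ι] {Y : ι → Ω → ℕ}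
    (hYm : ∀ j, Measurable (Y j)) (hY1 : ∀ j ω, Y j ω ≤ 1) (hind : iIndepFun Y P)
    {a x : ι → ℝ} (ha : ∀ j, a j ∈ Set.Icc 0 1) (hx : ∀ j, 0 ≤ x j) {α θ : ℝ} (hα : 1 ≤ α)
    (hθ : θ ∈ Set.Ioc 0 1) (hY : ∀ j, P.real {ω | Y j ω = 1} = α * x j - ⌊α * x j⌋₊)
    (hsum : 1 ≤ ∑ j, a j * x j)
    (hlight : 1 / 2 ≤ ∑ j ∈ Finset.univ.filter (fun j => a j ≤ θ), a j * x j) :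
    P.real {ω | ∑ j, a j * ((⌊α * x j⌋₊ : ℝ) + Y j ω) ≤ 1} ≤
      exp (log α / θ - (α - 1) * (1 + θ⁻¹) / 2) := by
  -- `s θ = ln α`, so a light entry `a ≤ θ` keeps a `(1 - 1/α) / θ` share of `1 - e^{-s a}`.
  set s := log α / θ
  have hs : 0 ≤ s := div_nonneg (log_nonneg hα) hθ.1.le
  set X : ι → Ω → ℝ := fun j ω => a j * ((⌊α * x j⌋₊ : ℝ) + Y j ω)
  have hXind : iIndepFun X P :=
    hind.comp (fun j k => a j * ((⌊α * x j⌋₊ : ℝ) + k)) fun _ => measurable_from_top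
  have hXm : ∀ j, Measurable (X j) := fun j =>
    (measurable_from_top (f := fun k : ℕ => a j * ((⌊α * x j⌋₊ : ℝ) + k))).comp (hYm j)
  have hX0 : ∀ j ω, 0 ≤ X j ω := fun j ω => mul_nonneg (ha j).1 (by positivity)
  have hmgf : ∀ j, mgf (X j) P (-s) ≤ exp (-(α * x j * (1 - exp (-(s * a j))))) := fun j => by
    have h := mgf_neg_mul_add_bernoulli_le (P := P) (hYm j) (hY1 j) (Nat.cast_nonneg _)
      (mul_nonneg hs (ha j).1) (k := ⌊α * x j⌋₊)
    rwa [hY, add_sub_cancel] at h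
  calc P.real {ω | ∑ j, X j ω ≤ 1}
      ≤ exp (s * 1) * ∏ j, mgf (X j) P (-s) :=
        measureReal_sum_le_le_exp_mul_prod_mgf hXind hXm hX0 hs 1
    _ ≤ exp s * ∏ j, exp (-(α * x j * (1 - exp (-(s * a j))))) := by
        rw [mul_one]
        gcongr with j
        · exact fun j _ => mgf_nonneg
        · exact hmgf j
    _ = exp (s - ∑ j, α * x j * (1 - exp (-(s * a j)))) := by
        rw [← exp_sum, ← exp_add, Finset.sum_neg_distrib, sub_eq_add_neg]
    _ ≤ _ := by
        gcongr
        exact half_mul_le_sum_mul_one_sub_exp_neg ha hx hα hθ hsum hlight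

end

lemma log_div_sub_le_log_div {α θ Δ : ℝ} (hθ : θ ∈ Set.Ioc 0 1) (hΔ : 0 < Δ)
    (hα : 2 * log α + 3 ≤ α) (hαΔ : log α + log Δ + 1 ≤ α) :
    log α / θ - (α - 1) * (1 + θ⁻¹) / 2 ≤ log (θ / Δ) := by
  obtain ⟨hθ0, hθ1⟩ := hθ
  have hT : 1 ≤ θ⁻¹ := one_le_inv_iff₀.2 ⟨hθ0, hθ1⟩
  have hlogT := log_le_sub_one_of_pos (inv_pos.2 hθ0)
  have hneg : (θ⁻¹ - 1) * (2 * log α + 3 - α) ≤ 0 :=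
    mul_nonpos_of_nonneg_of_nonpos (by linarith) (by linarith)
  rw [log_div hθ0.ne' hΔ.ne', ← neg_neg (log θ), ← log_inv, div_eq_mul_inv]
  nlinarith

lemma log_le_div_four_add_one {x : ℝ} (hx : 0 < x) : log x ≤ x / 4 + 1 := by
  have h := log_le_sub_one_of_pos (div_pos hx four_pos)
  rw [log_div hx.ne' four_ne_zero, show (4 : ℝ) = 2 ^ 2 by norm_num, log_pow] at h
  linarith [log_two_lt_d9]

lemma bounds_of_eq_log_add_log_log_add_ten {Δ α : ℝ} (hΔ : exp 1 ≤ Δ)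
    (hα : α = log Δ + log (log Δ) + 10) :
    1 ≤ α ∧ 2 * log α + 3 ≤ α ∧ log α + log Δ + 1 ≤ α := by
  have hL : 1 ≤ log Δ := by rwa [le_log_iff_exp_le (by linarith [exp_pos 1])]
  have hlogL := log_nonneg hL
  have hlogL' := log_le_sub_one_of_pos (by linarith : 0 < log Δ)
  have hα0 : 0 < α := by linarith
  refine ⟨by linarith, by linarith [log_le_div_four_add_one hα0], ?_⟩
  have h16 : log α ≤ log (2 ^ 4 * log Δ) := log_le_log hα0 (by linarith)
  rw [log_mul (by norm_num) (by linarith), log_pow, Nat.cast_ofNat] at h16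
  linarith [log_two_lt_d9]

/-- the failure probability of a constraint is at most
`C·θ_i/Δ₁` for the ℓ1-sparse choice of α (Lemma `concentration`). -/
theorem stmt_14 :
    ∃ c₀ C : ℝ, 0 ≤ c₀ ∧ 1 ≤ C ∧
      ∀ (m n : ℕ) (A : Fin m → Fin n → ℝ) (x : Fin n → ℝ) (Δ₁ α : ℝ)
        (Ω : Type) (_ : MeasurableSpace Ω) (P : Measure Ω),
        IsProbabilityMeasure P →
        ∀ (Y : Fin n → Ω → ℕ) (z : Ω → Fin n → ℕ),
        (∀ i j, A i j ∈ Set.Icc (0 : ℝ) 1) →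
        (∀ j, 0 ≤ x j) →
        (∀ i, 1 ≤ ∑ j, A i j * x j) →
        IsGreatest (Set.range fun j : Fin n => ∑ i, A i j) Δ₁ →
        Real.exp 1 ≤ Δ₁ →
        α = Real.log Δ₁ + Real.log (Real.log Δ₁) + c₀ →
        (∀ j, Measurable (Y j)) →
        (∀ j ω, Y j ω ≤ 1) →
        iIndepFun Y P →
        (∀ j, P {ω | Y j ω = 1} = ENNReal.ofReal (α * x j - (⌊α * x j⌋₊ : ℝ))) →
        (∀ ω j, z ω j = ⌊α * x j⌋₊ + Y j ω) →
        ∀ (i : Fin m) (θ : ℝ), θ ∈ Set.Ioc (0 : ℝ) 1 →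
        (1 / 2 ≤ ∑ j ∈ Finset.univ.filter (fun j => θ ≤ A i j), A i j * x j) →
        (1 / 2 ≤ ∑ j ∈ Finset.univ.filter (fun j => A i j ≤ θ), A i j * x j) →
        P {ω | ∑ j, A i j * (z ω j : ℝ) < 1} ≤ ENNReal.ofReal (C * θ / Δ₁) := by
  refine ⟨10, 1, by norm_num, le_rfl, ?_⟩
  intro m n A x Δ₁ α Ω _ P _ Y z hA hx hAx _ hΔ hα hYm hY1 hYi hYp hz i θ hθ _ hlight
  obtain ⟨hα1, hα3, hαΔ⟩ := bounds_of_eq_log_add_log_log_add_ten hΔ hα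
  have hΔ0 : 0 < Δ₁ := (exp_pos 1).trans_le hΔ
  have hY : ∀ j, P.real {ω | Y j ω = 1} = α * x j - ⌊α * x j⌋₊ := fun j => by
    rw [measureReal_def, hYp, ENNReal.toReal_ofReal (sub_nonneg.2 (Nat.floor_le (by
      nlinarith [hx j])))]
  have hbound := measureReal_sum_floor_add_le_le_exp hYm hY1 hYi (hA i) hx hα1 hθ hY
    (hAx i) hlight
  calc P {ω | ∑ j, A i j * (z ω j : ℝ) < 1}
      ≤ P {ω | ∑ j, A i j * ((⌊α * x j⌋₊ : ℝ) + Y j ω) ≤ 1} :=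
        measure_mono fun ω hω => by
          simp only [Set.mem_ofPred_eq, hz, Nat.cast_add] at hω ⊢
          exact hω.le
    _ = ENNReal.ofReal (P.real {ω | ∑ j, A i j * ((⌊α * x j⌋₊ : ℝ) + Y j ω) ≤ 1}) :=
        (ofReal_measureReal).symm
    _ ≤ ENNReal.ofReal (1 * θ / Δ₁) := by
        gcongr
        rw [one_mul, ← exp_log (div_pos hθ.1 hΔ0)]
        exact hbound.trans (exp_le_exp.2 (log_div_sub_le_log_div hθ hΔ0 hα3 hαΔ))
end

section
/- Let A be an m×n matrix with entries in [0,1], c ∈ ℝ_{≥0}^n, x ∈ ℝ_{≥0}^n with Ax ≥ 1 componentwise, α > 2, C > 0, and for each i ∈ [m] let θ_i ∈ (0,1]. For y ∈ {0,1}^n define Φ_i^{(1)}(y) = (α·(Ax)_i)^{1 − ∑_{j=1}^n A_{i,j}(⌊αx_j⌋ + y_j)}, Φ_i^{(2)}(y) = (α·(Ax)_i/2)^{(1 − ∑_{j : A_{i,j} ≤ θ_i} A_{i,j}(⌊αx_j⌋ + y_j))/θ_i}, Φ_i(y) = min(Φ_i^{(1)}(y), Φ_i^{(2)}(y)), and Φ(y)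 = ⟨c,⌊αx⌋⟩ + ⟨c,y⟩ + C·∑_{i=1}^m Φ_i(y)·∑_{j=1}^n c_j A_{i,j} x_j. Then for every y ∈ {0,1}^n, ⟨c,⌊αx⌋⟩ + ⟨c,y⟩ + C·∑_{i : (A(⌊αx⌋ + y))_i < 1} ∑_{j=1}^n c_j A_{i,j} x_j ≤ Φ(y). -/
/-- the pessimistic estimator Φ dominates the actual
rounding-plus-fixing cost (Lemma `pessimistic-cost`). -/
theorem stmt_15 (m n : ℕ) (A : Fin m → Fin n → ℝ) (c x : Fin n → ℝ)
    (α C : ℝ) (θ : Fin m → ℝ) (y : Fin n → ℕ)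
    (hA : ∀ i j, A i j ∈ Set.Icc (0 : ℝ) 1)
    (hc : ∀ j, 0 ≤ c j) (hx : ∀ j, 0 ≤ x j)
    (hAx : ∀ i, 1 ≤ ∑ j, A i j * x j)
    (hα : 2 < α) (hC : 0 < C)
    (hθ : ∀ i, θ i ∈ Set.Ioc (0 : ℝ) 1)
    (hy : ∀ j, y j ≤ 1) :
    (∑ j, c j * (⌊α * x j⌋₊ : ℝ)) + (∑ j, c j * (y j : ℝ)) +
        C * ∑ i ∈ Finset.univ.filter
            (fun i : Fin m => ∑ j, A i j * ((⌊α * x j⌋₊ : ℝ) + (y j : ℝ)) < 1),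
          ∑ j, c j * A i j * x j ≤
      (∑ j, c j * (⌊α * x j⌋₊ : ℝ)) + (∑ j, c j * (y j : ℝ)) +
        C * ∑ i : Fin m,
          (min
            ((α * ∑ j, A i j * x j) ^
              (1 - ∑ j, A i j * ((⌊α * x j⌋₊ : ℝ) + (y j : ℝ))))
            ((α * (∑ j, A i j * x j) / 2) ^
              ((1 - ∑ j ∈ Finset.univ.filter (fun j => A i j ≤ θ i),
                  A i j * ((⌊α * x j⌋₊ : ℝ) + (y j : ℝ))) / θ i))) *
            ∑ j, c j * A i j * x j := by
  have hS : ∀ i, 0 ≤ ∑ j, c j * A i j * x j := fun i =>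
    Finset.sum_nonneg fun j _ => mul_nonneg (mul_nonneg (hc j) (hA i j).1) (hx j)
  have hbase1 : ∀ i, (1:ℝ) ≤ α * ∑ j, A i j * x j := fun i => by
    have := hAx i
    nlinarith [hAx i]
  have hbase2 : ∀ i, (1:ℝ) ≤ α * (∑ j, A i j * x j) / 2 := fun i => by
    nlinarith [hAx i]
  have hΦnn : ∀ i, 0 ≤ (min
            ((α * ∑ j, A i j * x j) ^
              (1 - ∑ j, A i j * ((⌊α * x j⌋₊ : ℝ) + (y j : ℝ))))
            ((α * (∑ j, A i j * x j) / 2) ^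
              ((1 - ∑ j ∈ Finset.univ.filter (fun j => A i j ≤ θ i),
                  A i j * ((⌊α * x j⌋₊ : ℝ) + (y j : ℝ))) / θ i))) := fun i =>
    le_min (Real.rpow_nonneg (by linarith [hbase1 i]) _)
      (Real.rpow_nonneg (by linarith [hbase2 i]) _)
  gcongr
  calc (∑ i ∈ Finset.univ.filter
            (fun i : Fin m => ∑ j, A i j * ((⌊α * x j⌋₊ : ℝ) + (y j : ℝ)) < 1),
          ∑ j, c j * A i j * x j)
      ≤ ∑ i ∈ Finset.univ.filter
            (fun i : Fin m => ∑ j, A i j * ((⌊α * x j⌋₊ : ℝ) + (y j : ℝ)) < 1),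
          (min
            ((α * ∑ j, A i j * x j) ^
              (1 - ∑ j, A i j * ((⌊α * x j⌋₊ : ℝ) + (y j : ℝ))))
            ((α * (∑ j, A i j * x j) / 2) ^
              ((1 - ∑ j ∈ Finset.univ.filter (fun j => A i j ≤ θ i),
                  A i j * ((⌊α * x j⌋₊ : ℝ) + (y j : ℝ))) / θ i))) *
            ∑ j, c j * A i j * x j := by
        apply Finset.sum_le_sum
        intro i hi
        rw [Finset.mem_filter] at hi
        have hT : ∑ j, A i j * ((⌊α * x j⌋₊ : ℝ) + (y j : ℝ)) < 1 := hi.2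
        have hT' : (∑ j ∈ Finset.univ.filter (fun j => A i j ≤ θ i),
            A i j * ((⌊α * x j⌋₊ : ℝ) + (y j : ℝ))) ≤
            ∑ j, A i j * ((⌊α * x j⌋₊ : ℝ) + (y j : ℝ)) :=
          Finset.sum_le_sum_of_subset_of_nonneg (Finset.filter_subset _ _)
            (fun j _ _ => mul_nonneg (hA i j).1 (by positivity))
        refine le_mul_of_one_le_left (hS i) (le_min ?_ ?_)
        · exact Real.one_le_rpow (hbase1 i) (by linarith)
        · exact Real.one_le_rpow (hbase2 i) (div_nonneg (by linarith) (hθ i).1.le)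
    _ ≤ _ := Finset.sum_le_sum_of_subset_of_nonneg (Finset.filter_subset _ _)
        (fun i _ _ => mul_nonneg (hΦnn i) (hS i))
end

section
/- There exists a universal constant K ≥ 1 with the following property. Let A be an m×n matrix with entries in [0,1], c ∈ ℝ_{≥0}^n, x ∈ ℝ_{≥0}^n, i ∈ [m], δ ∈ (0,1), and θ > 0 such that ∑_{j : A_{i,j} ≥ θ} A_{i,j} x_j ≥ δ. Then there exists z ∈ ℕ^n with ∑_{j=1}^n A_{i,j} z_j ≥ 1 and ⟨c,z⟩ ≤ (K/(δ·θ))·∑_{j=1}^n c_j A_{i,j} x_j. -/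
/-- integral fixing vector with cost `O(1/(δθ))` of the
θ-big fractional mass (Lemma `small-fixing-cost`). -/
theorem stmt_17 :
    ∃ K : ℝ, 1 ≤ K ∧
      ∀ (m n : ℕ) (A : Fin m → Fin n → ℝ) (c x : Fin n → ℝ)
        (i : Fin m) (δ θ : ℝ),
        (∀ i' j, A i' j ∈ Set.Icc (0 : ℝ) 1) →
        (∀ j, 0 ≤ c j) → (∀ j, 0 ≤ x j) →
        δ ∈ Set.Ioo (0 : ℝ) 1 → 0 < θ →
        (δ ≤ ∑ j ∈ Finset.univ.filter (fun j => θ ≤ A i j), A i j * x j) →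
        ∃ z : Fin n → ℕ,
          1 ≤ ∑ j, A i j * (z j : ℝ) ∧
          ∑ j, c j * (z j : ℝ) ≤ (K / (δ * θ)) * ∑ j, c j * A i j * x j := by
  refine ⟨2, by norm_num, ?_⟩
  intro m n A c x i δ θ hA hc hx hδ hθ hsum
  obtain ⟨hδ0, hδ1⟩ := hδ
  set S := Finset.univ.filter (fun j => θ ≤ A i j) with hS
  have hSne : S.Nonempty := by
    by_contra h
    rw [Finset.not_nonempty_iff_eq_empty] at h
    rw [hS] at hsum
    rw [← hS, h, Finset.sum_empty] at hsum
    linarith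
  obtain ⟨j₀, hj₀S, hmin⟩ := S.exists_min_image c hSne
  have hj₀ : θ ≤ A i j₀ := (Finset.mem_filter.mp hj₀S).2
  have hA1 : A i j₀ ≤ 1 := (hA i j₀).2
  have hθ1 : θ ≤ 1 := le_trans hj₀ hA1
  set N := ⌈1/θ⌉₊ with hN
  have hNge : (1:ℝ)/θ ≤ N := Nat.le_ceil _
  have hNle : (N:ℝ) ≤ 2/θ := by
    have h1 : (1:ℝ) ≤ 1/θ := by rw [le_div_iff₀ hθ]; linarith
    have := Nat.ceil_lt_add_one (by positivity : (0:ℝ) ≤ 1/θ)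
    have : (N:ℝ) < 1/θ + 1 := this
    calc (N:ℝ) ≤ 1/θ + 1 := this.le
      _ ≤ 1/θ + 1/θ := by linarith
      _ = 2/θ := by ring
  refine ⟨fun j => if j = j₀ then N else 0, ?_, ?_⟩
  · have hsum1 : ∑ j, A i j * ((if j = j₀ then N else 0 : ℕ) : ℝ) = A i j₀ * N := by
      rw [Finset.sum_eq_single j₀]
      · simp
      · intro b _ hb; simp [hb]
      · simp
    rw [hsum1]
    calc (1:ℝ) = θ * (1/θ) := by field_simp
      _ ≤ A i j₀ * N := by
        apply mul_le_mul hj₀ hNge (by positivity) (le_trans hθ.le hj₀)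
  · have hsum2 : ∑ j, c j * ((if j = j₀ then N else 0 : ℕ) : ℝ) = c j₀ * N := by
      rw [Finset.sum_eq_single j₀]
      · simp
      · intro b _ hb; simp [hb]
      · simp
    rw [hsum2]
    have hkey : c j₀ * δ ≤ ∑ j ∈ S, c j * A i j * x j := by
      calc c j₀ * δ ≤ c j₀ * ∑ j ∈ S, A i j * x j := by
            apply mul_le_mul_of_nonneg_left _ (hc j₀)
            exact hsum
        _ = ∑ j ∈ S, c j₀ * (A i j * x j) := by rw [Finset.mul_sum]
        _ ≤ ∑ j ∈ S, c j * A i j * x j := by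
            apply Finset.sum_le_sum
            intro j hj
            have : c j₀ ≤ c j := hmin j hj
            have hAx : 0 ≤ A i j * x j := mul_nonneg (hA i j).1 (hx j)
            calc c j₀ * (A i j * x j) ≤ c j * (A i j * x j) :=
                  mul_le_mul_of_nonneg_right this hAx
              _ = c j * A i j * x j := by ring
    have hfull : ∑ j ∈ S, c j * A i j * x j ≤ ∑ j, c j * A i j * x j := by
      apply Finset.sum_le_sum_of_subset_of_nonneg (Finset.filter_subset _ _)
      intro j _ _
      exact mul_nonneg (mul_nonneg (hc j) (hA i j).1) (hx j)
    have h1 : c j₀ * (N:ℝ) ≤ c j₀ * (2/θ) :=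
      mul_le_mul_of_nonneg_left hNle (hc j₀)
    have h2 : c j₀ * (2/θ) = (2 / (δ * θ)) * (c j₀ * δ) := by
      field_simp
    rw [h2] at h1
    calc c j₀ * (N:ℝ) ≤ (2 / (δ * θ)) * (c j₀ * δ) := h1
      _ ≤ (2 / (δ * θ)) * ∑ j, c j * A i j * x j := by
          apply mul_le_mul_of_nonneg_left (le_trans hkey hfull)
          positivity
end

section
/- Let A be an m×n matrix with nonnegative entries and x ∈ ℝ_{≥0}^n, let δ ∈ (0,1), set α = (1 + δ + δ²/2)/(1 − δ), and let z be the randomized rounding of x at scale α. Fix i ∈ [m] and let θ ∈ (0,1] satisfy ∑_{j : A_{i,j} ≤ θ} A_{i,j} x_j ≥ 1 − δ. Then P[(Az)_i < 1] ≤ exp(−δ²/(2θ)). -/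
/-!
Keep only the columns with `A i j ≤ θ`. There each term `A i j * z j` is a nonnegative constant
plus a variable with values in `[0, θ]`, so convexity of `exp` bounds its moment generating function
at `t` by `exp (c * mean)` with `c = (exp (t * θ) - 1) / θ`. By independence the same bound holds
for the restricted sum, whose mean is at least `α (1 - δ) = μ := 1 + δ + δ² / 2`. The Chernoff
bound with `exp (t * θ) = 1 / μ` gives `exp ((log μ + 1 - μ) / θ)`, and `log μ ≤ δ` because
`μ ≤ exp δ`.
-/

open MeasureTheory ProbabilityTheory Real

lemma Real.exp_mul_le_one_add_mul_div {v θ : ℝ} (t : ℝ) (hv : 0 ≤ v) (hvθ : v ≤ θ) (hθ : 0 < θ) :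
    exp (t * v) ≤ 1 + v * ((exp (t * θ) - 1) / θ) := by
  have hw : v / θ ≤ 1 := (div_le_one hθ).mpr hvθ
  have key := convexOn_exp.2 (Set.mem_univ (t * θ)) (Set.mem_univ 0) (div_nonneg hv hθ.le)
    (sub_nonneg.mpr hw) (add_sub_cancel _ _)
  have hpt : (v / θ) • (t * θ) + (1 - v / θ) • (0 : ℝ) = t * v := by
    simp only [smul_eq_mul, mul_zero, add_zero]; field_simp
  rw [hpt] at key
  calc exp (t * v) ≤ v / θ * exp (t * θ) + (1 - v / θ) * exp 0 := key
    _ = 1 + v * ((exp (t * θ) - 1) / θ) := by rw [exp_zero]; ring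

lemma Real.le_exp_mul_sub_one_div (t : ℝ) {θ : ℝ} (hθ : 0 < θ) : t ≤ (exp (t * θ) - 1) / θ := by
  rw [le_div_iff₀ hθ]; linarith [add_one_le_exp (t * θ)]

section

variable {Ω : Type*} [MeasurableSpace Ω] {P : Measure Ω} [IsProbabilityMeasure P]

lemma mgf_le_exp_mul_integral {X : Ω → ℝ} (hX : Measurable X) {b θ : ℝ} (t : ℝ) (hb : 0 ≤ b)
    (hθ : 0 < θ) (hXb : ∀ ω, X ω ∈ Set.Icc b (b + θ)) :
    mgf X P t ≤ exp ((exp (t * θ) - 1) / θ * P[X]) := by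
  set c := (exp (t * θ) - 1) / θ
  have hint : Integrable X P :=
    Integrable.of_mem_Icc b (b + θ) hX.aemeasurable (Filter.Eventually.of_forall hXb)
  have hpt : ∀ ω, exp (t * X ω) ≤ exp (t * b) * (1 + (X ω - b) * c) := fun ω => by
    rw [show t * X ω = t * b + t * (X ω - b) by ring, exp_add]
    gcongr
    exact exp_mul_le_one_add_mul_div t (by linarith [(hXb ω).1]) (by linarith [(hXb ω).2]) hθ
  have hbound_int : Integrable (fun ω => exp (t * b) * (1 + (X ω - b) * c)) P :=
    ((integrable_const _).add ((hint.sub (integrable_const _)).mul_const _)).const_mul _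
  have hexp_int : Integrable (fun ω => exp (t * X ω)) P :=
    hbound_int.mono' (hX.const_mul t).exp.aestronglyMeasurable
      (Filter.Eventually.of_forall fun ω => by rw [norm_of_nonneg (exp_pos _).le]; exact hpt ω)
  calc mgf X P t ≤ ∫ ω, exp (t * b) * (1 + (X ω - b) * c) ∂P :=
        integral_mono hexp_int hbound_int hpt
    _ = exp (t * b) * (1 + (P[X] - b) * c) := by
        have hsub : Integrable (fun ω => X ω - b) P := hint.sub (integrable_const b)
        rw [integral_const_mul, integral_add (integrable_const 1) (hsub.mul_const c),
          integral_mul_const, integral_sub hint (integrable_const b)]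
        simp
    _ ≤ exp (t * b) * exp ((P[X] - b) * c) := by
        gcongr; linarith [add_one_le_exp ((P[X] - b) * c)]
    _ ≤ exp (c * b) * exp ((P[X] - b) * c) := by
        gcongr; exact le_exp_mul_sub_one_div t hθ
    _ = exp (c * P[X]) := by rw [← exp_add]; ring_nf

lemma mgf_sum_le_exp_mul_sum_integral {ι : Type*} {X : ι → Ω → ℝ} (hind : iIndepFun X P)
    (hmeas : ∀ j, Measurable (X j)) {S : Finset ι} {b : ι → ℝ} {θ : ℝ} (t : ℝ)
    (hb : ∀ j ∈ S, 0 ≤ b j) (hXb : ∀ j ∈ S, ∀ ω, X j ω ∈ Set.Icc (b j) (b j + θ)) (hθ : 0 < θ) :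
    mgf (fun ω => ∑ j ∈ S, X j ω) P t ≤ exp ((exp (t * θ) - 1) / θ * ∑ j ∈ S, P[X j]) := by
  have hW : ∑ j ∈ S, X j = fun ω => ∑ j ∈ S, X j ω := by ext; simp
  calc mgf (fun ω => ∑ j ∈ S, X j ω) P t = ∏ j ∈ S, mgf (X j) P t := by
        rw [← hW, hind.mgf_sum hmeas S]
    _ ≤ ∏ j ∈ S, exp ((exp (t * θ) - 1) / θ * P[X j]) :=
        Finset.prod_le_prod (fun _ _ => mgf_nonneg)
          fun j hj => mgf_le_exp_mul_integral (hmeas j) t (hb j hj) hθ (hXb j hj)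
    _ = _ := by rw [← exp_sum, Finset.mul_sum]

theorem measureReal_sum_le_le_exp_s18 {ι : Type*} {X : ι → Ω → ℝ} (hind : iIndepFun X P)
    (hmeas : ∀ j, Measurable (X j)) {S : Finset ι} {b : ι → ℝ} {θ μ s : ℝ}
    (hb : ∀ j ∈ S, 0 ≤ b j) (hXb : ∀ j ∈ S, ∀ ω, X j ω ∈ Set.Icc (b j) (b j + θ))
    (hθ : 0 < θ) (hs : 0 < s) (hsμ : s ≤ μ) (hμ : μ ≤ ∑ j ∈ S, P[X j]) :
    P.real {ω | ∑ j ∈ S, X j ω ≤ s} ≤ exp ((s * log (μ / s) + s - μ) / θ) := by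
  have hμ0 : 0 < μ := hs.trans_le hsμ
  have hsμ1 : s / μ ≤ 1 := (div_le_one hμ0).2 hsμ
  -- the optimal Chernoff parameter
  set t := log (s / μ) / θ
  have ht : t ≤ 0 := div_nonpos_of_nonpos_of_nonneg (log_nonpos (by positivity) hsμ1) hθ.le
  have hexp : exp (t * θ) = s / μ := by
    rw [div_mul_cancel₀ _ hθ.ne', exp_log (by positivity)]
  set c := (s / μ - 1) / θ
  have hc : c ≤ 0 := div_nonpos_of_nonpos_of_nonneg (by linarith) hθ.le
  have hmgf : mgf (fun ω => ∑ j ∈ S, X j ω) P t ≤ exp (c * μ) := by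
    refine (mgf_sum_le_exp_mul_sum_integral hind hmeas t hb hXb hθ).trans ?_
    rw [hexp]
    exact exp_le_exp.2 (mul_le_mul_of_nonpos_left hμ hc)
  have hint : Integrable (fun ω => exp (t * ∑ j ∈ S, X j ω)) P :=
    (integrable_const 1).mono'
      (((Finset.measurable_sum S fun j _ => hmeas j).const_mul t).exp.aestronglyMeasurable)
      (Filter.Eventually.of_forall fun ω => by
        rw [norm_of_nonneg (exp_pos _).le, exp_le_one_iff]
        exact mul_nonpos_of_nonpos_of_nonneg ht
          (Finset.sum_nonneg fun j hj => (hb j hj).trans (hXb j hj ω).1))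
  calc P.real {ω | ∑ j ∈ S, X j ω ≤ s} ≤ exp (-t * s) * exp (c * μ) :=
        (measure_le_le_exp_mul_mgf s ht hint).trans
          (mul_le_mul_of_nonneg_left hmgf (exp_pos _).le)
    _ = exp ((s * log (μ / s) + s - μ) / θ) := by
        rw [← exp_add]
        congr 1
        simp only [t, c]
        rw [← inv_div μ s, log_inv]
        field_simp
        ring

lemma integral_natFloor_add_eq {Y : Ω → ℕ} (hY : Measurable Y) (hY1 : ∀ ω, Y ω ≤ 1) {r : ℝ}
    (hr : 0 ≤ r) (hYber : P {ω | Y ω = 1} = ENNReal.ofReal (r - ⌊r⌋₊)) :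
    ∫ ω, ((⌊r⌋₊ + Y ω : ℕ) : ℝ) ∂P = r := by
  have hset : MeasurableSet {ω | Y ω = 1} := hY (measurableSet_singleton 1)
  have hind : ∀ ω, (Y ω : ℝ) = {ω | Y ω = 1}.indicator 1 ω := fun ω => by
    rcases Nat.le_one_iff_eq_zero_or_eq_one.mp (hY1 ω) with h | h <;> simp [h]
  simp only [Nat.cast_add, hind]
  rw [integral_add (integrable_const _) ((integrable_const 1).indicator hset), integral_const,
    probReal_univ, one_smul, integral_indicator_one hset, measureReal_def, hYber,
    ENNReal.toReal_ofReal (sub_nonneg.2 (Nat.floor_le hr))]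
  ring

theorem measure_sum_mul_floor_add_lt_le {ι : Type*} [Fintype ι] {a r : ι → ℝ}
    (ha : ∀ j, 0 ≤ a j) (hr : ∀ j, 0 ≤ r j) {Y : ι → Ω → ℕ} (hYmeas : ∀ j, Measurable (Y j))
    (hY01 : ∀ j ω, Y j ω ≤ 1) (hYind : iIndepFun Y P)
    (hYber : ∀ j, P {ω | Y j ω = 1} = ENNReal.ofReal (r j - ⌊r j⌋₊)) {θ μ s : ℝ} (hθ : 0 < θ)
    (hs : 0 < s) (hsμ : s ≤ μ) (hμ : μ ≤ ∑ j ∈ Finset.univ.filter (a · ≤ θ), a j * r j) :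
    P {ω | ∑ j, a j * ((⌊r j⌋₊ + Y j ω : ℕ) : ℝ) < s} ≤
      ENNReal.ofReal (exp ((s * log (μ / s) + s - μ) / θ)) := by
  set X : ι → Ω → ℝ := fun j ω => a j * ((⌊r j⌋₊ + Y j ω : ℕ) : ℝ)
  set g : ι → ℕ → ℝ := fun j y => a j * ((⌊r j⌋₊ + y : ℕ) : ℝ)
  have hXmeas : ∀ j, Measurable (X j) := fun j =>
    (measurable_from_top : Measurable (g j)).comp (hYmeas j)
  have hXind : iIndepFun X P := hYind.comp g fun j => measurable_from_top
  have hXb : ∀ j ∈ Finset.univ.filter (a · ≤ θ), ∀ ω,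
      X j ω ∈ Set.Icc (a j * ⌊r j⌋₊) (a j * ⌊r j⌋₊ + θ) := by
    intro j hj ω
    have haθ : a j ≤ θ := (Finset.mem_filter.1 hj).2
    have hY : (Y j ω : ℝ) ≤ 1 := by exact_mod_cast hY01 j ω
    simp only [X, Nat.cast_add, mul_add, Set.mem_Icc]
    constructor <;> nlinarith [ha j, (Y j ω).cast_nonneg (α := ℝ)]
  have hmean : ∀ j, P[X j] = a j * r j := fun j => by
    simp only [X, integral_const_mul,
      integral_natFloor_add_eq (hYmeas j) (hY01 j) (hr j) (hYber j)]
  have hevent : {ω | ∑ j, X j ω < s} ⊆ {ω | ∑ j ∈ Finset.univ.filter (a · ≤ θ), X j ω ≤ s} :=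
    fun ω hω => le_trans (Finset.sum_le_sum_of_subset_of_nonneg (Finset.filter_subset _ _)
      fun j _ _ => mul_nonneg (ha j) (Nat.cast_nonneg _)) (le_of_lt hω)
  refine (measure_mono hevent).trans ((ENNReal.le_ofReal_iff_toReal_le (measure_ne_top _ _)
    (exp_pos _).le).2 ?_)
  exact measureReal_sum_le_le_exp_s18 hXind hXmeas
    (fun j _ => mul_nonneg (ha j) (Nat.cast_nonneg _)) hXb hθ hs hsμ (by simpa only [hmean])

end

lemma Real.log_one_add_add_sq_div_two_le {δ : ℝ} (hδ : 0 ≤ δ) : log (1 + δ + δ ^ 2 / 2) ≤ δ :=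
  (log_le_iff_le_exp (by positivity)).2 (quadratic_le_exp_of_nonneg hδ)

/-- concentration bound in the small-Δ₁ regime
(Lemma `small-columnsum-concentration`). -/
theorem stmt_18 (m n : ℕ) (A : Fin m → Fin n → ℝ) (x : Fin n → ℝ) (δ α : ℝ)
    (Ω : Type*) [MeasurableSpace Ω] (P : Measure Ω) [IsProbabilityMeasure P]
    (Y : Fin n → Ω → ℕ) (z : Ω → Fin n → ℕ)
    (hA : ∀ i j, 0 ≤ A i j)
    (hx : ∀ j, 0 ≤ x j)
    (hδ : δ ∈ Set.Ioo (0 : ℝ) 1)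
    (hα : α = (1 + δ + δ ^ 2 / 2) / (1 - δ))
    (hYmeas : ∀ j, Measurable (Y j))
    (hY01 : ∀ j ω, Y j ω ≤ 1)
    (hYind : iIndepFun Y P)
    (hYber : ∀ j, P {ω | Y j ω = 1} = ENNReal.ofReal (α * x j - (⌊α * x j⌋₊ : ℝ)))
    (hz : ∀ ω j, z ω j = ⌊α * x j⌋₊ + Y j ω)
    (i : Fin m) (θ : ℝ) (hθ : θ ∈ Set.Ioc (0 : ℝ) 1)
    (hsmall : 1 - δ ≤ ∑ j ∈ Finset.univ.filter (fun j => A i j ≤ θ), A i j * x j) :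
    P {ω | ∑ j, A i j * (z ω j : ℝ) < 1} ≤
      ENNReal.ofReal (Real.exp (-δ ^ 2 / (2 * θ))) := by
  obtain ⟨hδ0, hδ1⟩ := hδ
  have hα0 : 0 ≤ α := by rw [hα]; exact div_nonneg (by positivity) (by linarith)
  have hμ : 1 + δ + δ ^ 2 / 2 ≤ ∑ j ∈ Finset.univ.filter (A i · ≤ θ), A i j * (α * x j) :=
    calc 1 + δ + δ ^ 2 / 2 = α * (1 - δ) := by rw [hα, div_mul_cancel₀ _ (by linarith)]
      _ ≤ α * ∑ j ∈ Finset.univ.filter (A i · ≤ θ), A i j * x j :=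
          mul_le_mul_of_nonneg_left hsmall hα0
      _ = _ := by rw [Finset.mul_sum]; ring_nf
  simp only [hz]
  refine (measure_sum_mul_floor_add_lt_le (hA i) (fun j => mul_nonneg hα0 (hx j)) hYmeas hY01
    hYind hYber hθ.1 one_pos (by nlinarith) hμ).trans
    (ENNReal.ofReal_le_ofReal (exp_le_exp.2 ?_))
  rw [div_one, one_mul, show -δ ^ 2 / (2 * θ) = -(δ ^ 2 / 2) / θ by ring]
  exact div_le_div_of_nonneg_right (by linarith [log_one_add_add_sq_div_two_le hδ0.le]) hθ.1.le
end

section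
/- Let γ > 0 and let X_1, …, X_n be independent random variables with X_i ∈ [0,γ] almost surely for each i, let μ = E[∑_{i=1}^n X_i], and let β ∈ ℝ satisfy 0 < β < μ. Then P[∑_{i=1}^n X_i < β] ≤ exp((β − μ + β·ln(μ/β))/γ). -/
open MeasureTheory ProbabilityTheory Real

/-! By convexity of `exp`, on `[0, γ]` the function `x ↦ exp (t x)` lies below its chord
`1 + c x` with `c = (exp (t γ) - 1) / γ`, so `E[exp (t Xᵢ)] ≤ 1 + c E[Xᵢ] ≤ exp (c E[Xᵢ])`.
By independence the moment generating function of the sum is at most `exp (c μ)`, and the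
Chernoff bound for `t ≤ 0` gives `P[∑ Xᵢ ≤ β] ≤ exp (-t β + c μ)`. Choosing `t` with
`exp (t γ) = β / μ` turns the exponent into `(β - μ + β log (μ / β)) / γ`. -/

theorem exp_mul_le_one_add_of_mem_Icc {γ x : ℝ} (hγ : 0 < γ) (hx : x ∈ Set.Icc 0 γ) (t : ℝ) :
    exp (t * x) ≤ 1 + (exp (t * γ) - 1) / γ * x := by
  have hw : 0 ≤ x / γ := div_nonneg hx.1 hγ.le
  have hw' : 0 ≤ 1 - x / γ := sub_nonneg.2 (div_le_one_of_le₀ hx.2 hγ.le)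
  have hchord := convexOn_exp.2 (Set.mem_univ 0) (Set.mem_univ (t * γ)) hw' hw (by ring)
  have hpoint : (1 - x / γ) • (0 : ℝ) + (x / γ) • (t * γ) = t * x := by
    simp only [smul_eq_mul]; field_simp; ring
  rw [hpoint] at hchord
  calc exp (t * x) ≤ (1 - x / γ) * exp 0 + x / γ * exp (t * γ) := hchord
    _ = 1 + (exp (t * γ) - 1) / γ * x := by rw [exp_zero]; ring

section

variable {Ω : Type*} [MeasurableSpace Ω] {P : Measure Ω} [IsProbabilityMeasure P] {γ : ℝ}

theorem mgf_le_exp_of_mem_Icc {Y : Ω → ℝ} (hγ : 0 < γ) (hY : AEMeasurable Y P)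
    (hYb : ∀ᵐ ω ∂P, Y ω ∈ Set.Icc 0 γ) (t : ℝ) :
    mgf Y P t ≤ exp ((exp (t * γ) - 1) / γ * P[Y]) := by
  set c := (exp (t * γ) - 1) / γ
  have hYint : Integrable Y P := .of_mem_Icc 0 γ hY hYb
  calc mgf Y P t ≤ ∫ ω, (1 + c * Y ω) ∂P := by
        refine integral_mono_of_nonneg (.of_forall fun ω ↦ (exp_pos _).le)
          ((integrable_const 1).add (hYint.const_mul c)) ?_
        filter_upwards [hYb] with ω hω using exp_mul_le_one_add_of_mem_Icc hγ hω t
    _ = 1 + c * P[Y] := by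
        rw [integral_add (integrable_const 1) (hYint.const_mul c), integral_const,
          probReal_univ, one_smul, integral_const_mul]
    _ ≤ exp (c * P[Y]) := by linarith [add_one_le_exp (c * P[Y])]

theorem measureReal_sum_le_le_exp_of_mem_Icc {ι : Type*} [Fintype ι] {X : ι → Ω → ℝ}
    (hγ : 0 < γ) (hXmeas : ∀ i, AEMeasurable (X i) P) (hXind : iIndepFun X P)
    (hXb : ∀ i, ∀ᵐ ω ∂P, X i ω ∈ Set.Icc 0 γ) {t : ℝ} (ht : t ≤ 0) (β : ℝ) :
    P.real {ω | ∑ i, X i ω ≤ β} ≤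
      exp (-t * β + (exp (t * γ) - 1) / γ * ∫ ω, ∑ i, X i ω ∂P) := by
  set c := (exp (t * γ) - 1) / γ
  have hSmeas : AEMeasurable (∑ i, X i) P := Finset.aemeasurable_sum _ fun i _ ↦ hXmeas i
  have hexpint : Integrable (fun ω ↦ exp (t * (∑ i, X i) ω)) P := by
    refine .of_mem_Icc 0 1 (hSmeas.const_mul t).exp ?_
    filter_upwards [ae_all_iff.2 hXb] with ω hω
    have hS : 0 ≤ (∑ i, X i) ω := by
      rw [Finset.sum_apply]; exact Finset.sum_nonneg fun i _ ↦ (hω i).1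
    exact ⟨(exp_pos _).le, exp_le_one_iff.2 (mul_nonpos_of_nonpos_of_nonneg ht hS)⟩
  have hprod : ∏ i, mgf (X i) P t ≤ exp (c * ∫ ω, ∑ i, X i ω ∂P) := by
    rw [integral_finsetSum _ fun i _ ↦ .of_mem_Icc 0 γ (hXmeas i) (hXb i), Finset.mul_sum,
      exp_sum]
    exact Finset.prod_le_prod (fun i _ ↦ mgf_nonneg)
      fun i _ ↦ mgf_le_exp_of_mem_Icc hγ (hXmeas i) (hXb i) t
  calc P.real {ω | ∑ i, X i ω ≤ β} ≤ exp (-t * β) * mgf (∑ i, X i) P t := by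
        simpa only [Finset.sum_apply] using measure_le_le_exp_mul_mgf β ht hexpint
    _ ≤ exp (-t * β) * exp (c * ∫ ω, ∑ i, X i ω ∂P) := by
        rw [hXind.mgf_sum₀ hXmeas]; gcongr
    _ = _ := (exp_add _ _).symm

end

/-- lower-tail Chernoff inequality for independent random
variables in `[0,γ]` (Lemma `unnormalized-chernoff`). -/
theorem stmt_19 (n : ℕ) (Ω : Type*) [MeasurableSpace Ω]
    (P : Measure Ω) [IsProbabilityMeasure P]
    (γ : ℝ) (hγ : 0 < γ)
    (X : Fin n → Ω → ℝ)
    (hXmeas : ∀ i, Measurable (X i))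
    (hXind : iIndepFun X P)
    (hXbound : ∀ i, ∀ᵐ ω ∂P, X i ω ∈ Set.Icc 0 γ)
    (μ β : ℝ)
    (hμ : μ = ∫ ω, (∑ i, X i ω) ∂P)
    (hβ0 : 0 < β) (hβμ : β < μ) :
    P {ω | ∑ i, X i ω < β} ≤
      ENNReal.ofReal (Real.exp ((β - μ + β * Real.log (μ / β)) / γ)) := by
  have hμ0 : 0 < μ := hβ0.trans hβμ
  set t := -log (μ / β) / γ
  have ht : t ≤ 0 := div_nonpos_of_nonpos_of_nonneg
    (neg_nonpos.2 (log_nonneg ((one_le_div hβ0).2 hβμ.le))) hγ.le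
  have hexp : exp (t * γ) = β / μ := by
    rw [div_mul_cancel₀ _ hγ.ne', ← log_inv, inv_div, exp_log (by positivity)]
  have hexponent : -t * β + (exp (t * γ) - 1) / γ * μ = (β - μ + β * log (μ / β)) / γ := by
    rw [hexp]; simp only [t]; field_simp; ring
  have hchernoff := measureReal_sum_le_le_exp_of_mem_Icc hγ (fun i ↦ (hXmeas i).aemeasurable)
    hXind hXbound ht β
  rw [← hμ, hexponent] at hchernoff
  calc P {ω | ∑ i, X i ω < β} ≤ P {ω | ∑ i, X i ω ≤ β} :=
        measure_mono fun _ hω ↦ le_of_lt (α := ℝ) hω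
    _ ≤ _ := (ENNReal.le_ofReal_iff_toReal_le (measure_ne_top _ _) (exp_pos _).le).2 hchernoff
end
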